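/- arXiv:1105.5176 — 7 statements merged into one kernel-verified Lean document; each statement's English description precedes it below -/
import Mathlib

section
/- For integers n, m with nm > 1, the mean of 1/F(A), taken over all 2^{nm} binary arrays A of size n×m, equals 1 - 1/(nm). -/
open scoped BigOperators

noncomputable section

/-- `A` is an array of size `n × m`: entries vanish outside `[0,n) × [0,m)`. -/
def IsArray (n m : ℤ) (A : ℤ × ℤ → ℝ) : Prop :=
  ∀ i j : ℤ, A (i, j) ≠ 0 → 0 ≤ i ∧ i < n ∧ 0 ≤ j ∧ j < m

/-- `A` is a binary array of size `n × m`. -/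
def IsBinaryArray (n m : ℤ) (A : ℤ × ℤ → ℝ) : Prop :=
  IsArray n m A ∧
    ∀ i j : ℤ, 0 ≤ i → i < n → 0 ≤ j → j < m → A (i, j) = 1 ∨ A (i, j) = -1

/-- Aperiodic autocorrelation of a two-dimensional array at displacement `(u, v)`. -/
def autocorr (A : ℤ × ℤ → ℝ) (u v : ℤ) : ℝ :=
  ∑ᶠ i : ℤ, ∑ᶠ j : ℤ, A (i, j) * A (i + u, j + v)

/-- Merit factor of an array of size `n × m`. -/
def meritFactor (n m : ℤ) (A : ℤ × ℤ → ℝ) : ℝ :=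
  ((n : ℝ) * m) ^ 2 / ∑ᶠ uv ∈ {x : ℤ × ℤ | x ≠ (0, 0)}, (autocorr A uv.1 uv.2) ^ 2

/-- `a` is a sequence of length `n`: entries vanish outside `[0,n)`. -/
def IsSeq (n : ℤ) (a : ℤ → ℝ) : Prop := ∀ i : ℤ, a i ≠ 0 → 0 ≤ i ∧ i < n

/-- `a` is a binary sequence of length `n`. -/
def IsBinarySeq (n : ℤ) (a : ℤ → ℝ) : Prop :=
  IsSeq n a ∧ ∀ i : ℤ, 0 ≤ i → i < n → a i = 1 ∨ a i = -1

/-- Aperiodic autocorrelation of a sequence at displacement `u`. -/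
def seqAutocorr (a : ℤ → ℝ) (u : ℤ) : ℝ := ∑ᶠ i : ℤ, a i * a (i + u)

/-- Merit factor of a sequence of length `n`. -/
def seqMeritFactor (n : ℤ) (a : ℤ → ℝ) : ℝ :=
  (n : ℝ) ^ 2 / ∑ᶠ u ∈ {u : ℤ | u ≠ 0}, (seqAutocorr a u) ^ 2

/-- Rotation of a sequence of length `n` by a real number `s`. -/
def seqRotate (n : ℤ) (s : ℝ) (a : ℤ → ℝ) : ℤ → ℝ :=
  fun i => if 0 ≤ i ∧ i < n then a ((i + ⌊(n : ℝ) * s⌋) % n) else 0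

/-- Rotation of an array of size `n × m` by real numbers `s` and `t`. -/
def arrRotate (n m : ℤ) (s t : ℝ) (A : ℤ × ℤ → ℝ) : ℤ × ℤ → ℝ :=
  fun x => if 0 ≤ x.1 ∧ x.1 < n ∧ 0 ≤ x.2 ∧ x.2 < m then
    A ((x.1 + ⌊(n : ℝ) * s⌋) % n, (x.2 + ⌊(m : ℝ) * t⌋) % m) else 0

/-- Generating function of an array of size `n × m`, evaluated at `(x, y)`. -/
def genFun (n m : ℕ) (A : ℤ × ℤ → ℝ) (x y : ℂ) : ℂ :=
  ∑ i ∈ Finset.range n, ∑ j ∈ Finset.range m, (A (i, j) : ℂ) * x ^ i * y ^ j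

/-- `zeta d = e^{iπ/d}`, a primitive `(2d)`-th root of unity. -/
def zeta (d : ℕ) : ℂ := Complex.exp (Real.pi * Complex.I / d)

/-- `eps p j = e^{2πij/p}`, a `p`-th root of unity. -/
def eps (p : ℕ) (j : ℤ) : ℂ := Complex.exp (2 * Real.pi * Complex.I * j / p)

/-- The Legendre sequence of length `p` (for `p` an odd prime). -/
def legendreSeq (p : ℕ) : ℤ → ℝ :=
  fun i => if 0 ≤ i ∧ i < p then (if i = 0 then 1 else (jacobiSym i p : ℝ)) else 0

/-- The ternary Legendre sequence of length `p` (for `p` an odd prime). -/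
def ternaryLegendreSeq (p : ℕ) : ℤ → ℝ :=
  fun i => if 0 ≤ i ∧ i < p then (jacobiSym i p : ℝ) else 0

/-- The binary array of size `n × m` determined by the sign pattern `σ`. -/
def signArray (n m : ℕ) (σ : Fin n × Fin m → Bool) : ℤ × ℤ → ℝ :=
  fun x =>
    if h : 0 ≤ x.1 ∧ x.1 < (n : ℤ) ∧ 0 ≤ x.2 ∧ x.2 < (m : ℤ) then
      (if σ (⟨x.1.toNat, by omega⟩, ⟨x.2.toNat, by omega⟩) then 1 else -1)
    else 0

/-!
Write the array as signs `s i = ±1` placed at positions `e i`. For a displacement `g ≠ 0` the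
correlation `C(g)` is the sum of `s i * s j` over the ordered pairs `(i, j)` with
`e j - e i = g`. Such pairs have `i ≠ j`, and two of them are never reverses of each other since
`g ≠ -g`; averaged over all sign patterns, `s i * s j * s k * s l` therefore has mean `1` when
`(i, j) = (k, l)` and `0` otherwise. So the mean of `C(g) ^ 2` is the number of pairs at
displacement `g`, and summing over `g ≠ 0` counts the ordered pairs of distinct cells,
`(nm) ^ 2 - nm`.
-/

open Finset Function

def boolSign (b : Bool) : ℝ := if b then 1 else -1

lemma boolSign_not (b : Bool) : boolSign (!b) = -boolSign b := by
  cases b <;> simp [boolSign]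

lemma boolSign_mul_self (b : Bool) : boolSign b * boolSign b = 1 := by
  cases b <;> simp [boolSign]

section Signs

variable {I : Type*} [Fintype I] [DecidableEq I]

lemma sum_eq_zero_of_update_not (a : I) (f : (I → Bool) → ℝ)
    (hf : ∀ σ, f (update σ a (!σ a)) = -f σ) : ∑ σ, f σ = 0 := by
  have hinv : Involutive fun σ : I → Bool => update σ a (!σ a) := fun σ => by simp
  have := Equiv.sum_comp (hinv.toPerm _) f
  simp only [Involutive.coe_toPerm, hf, sum_neg_distrib] at this
  linarith

lemma sum_boolSign_four_eq_zero {a b c d : I} (hab : a ≠ b) (hac : a ≠ c) (had : a ≠ d) :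
    ∑ σ : I → Bool, boolSign (σ a) * boolSign (σ b) * (boolSign (σ c) * boolSign (σ d)) = 0 :=
  sum_eq_zero_of_update_not a _ fun σ => by
    rw [update_self, update_of_ne hab.symm, update_of_ne hac.symm, update_of_ne had.symm,
      boolSign_not, neg_mul, neg_mul]

lemma sum_boolSign_pair_mul_pair {p q : I × I} (hp : p.1 ≠ p.2) (hq : q.1 ≠ q.2)
    (hpq : p ≠ q.swap) :
    ∑ σ : I → Bool, boolSign (σ p.1) * boolSign (σ p.2) * (boolSign (σ q.1) * boolSign (σ q.2))
      = if p = q then 2 ^ Fintype.card I else 0 := by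
  split_ifs with h
  · subst h
    have hsq (σ : I → Bool) :
        boolSign (σ p.1) * boolSign (σ p.2) * (boolSign (σ p.1) * boolSign (σ p.2)) = 1 := by
      rw [mul_mul_mul_comm, boolSign_mul_self, boolSign_mul_self, one_mul]
    simp [hsq]
  by_cases h1 : p.1 ≠ q.1 ∧ p.1 ≠ q.2
  · exact sum_boolSign_four_eq_zero hp h1.1 h1.2
  by_cases h2 : p.2 ≠ q.1 ∧ p.2 ≠ q.2
  · rw [← sum_boolSign_four_eq_zero hp.symm h2.1 h2.2]
    exact sum_congr rfl fun σ _ => by ring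
  exact absurd (Prod.ext_iff.mpr ⟨by grind, by grind⟩) hpq

end Signs

section Placement

variable {I G : Type*} [Fintype I] [DecidableEq G]

/-- Signs landing on the same position add up, so `e` need not be injective here. -/
def placeSigns (e : I → G) (σ : I → Bool) (x : G) : ℝ :=
  ∑ i, if e i = x then boolSign (σ i) else 0

lemma support_placeSigns_subset (e : I → G) (σ : I → Bool) :
    support (placeSigns e σ) ⊆ univ.image e := by
  intro x hx
  obtain ⟨i, -, hi⟩ := exists_ne_zero_of_sum_ne_zero hx
  simp only [coe_image, coe_univ, Set.image_univ]
  exact ⟨i, by_contra fun h => hi (if_neg h)⟩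

variable [AddCommGroup G]

def pairsAt (e : I → G) (g : G) : Finset (I × I) :=
  {p | e p.2 - e p.1 = g}

def pairSum (e : I → G) (σ : I → Bool) (g : G) : ℝ :=
  ∑ p ∈ pairsAt e g, boolSign (σ p.1) * boolSign (σ p.2)

def displacements (e : I → G) : Finset G :=
  univ.image fun p : I × I => e p.2 - e p.1

lemma finsum_placeSigns_mul_placeSigns_add (e : I → G) (σ : I → Bool) (g : G) :
    ∑ᶠ x, placeSigns e σ x * placeSigns e σ (x + g) = pairSum e σ g := by
  rw [finsum_eq_sum_of_support_subset _
    ((support_mul_subset_left _ _).trans (support_placeSigns_subset e σ))]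
  simp only [placeSigns, sum_mul, ite_mul, zero_mul]
  rw [sum_comm]
  simp only [sum_ite_eq, mem_image_of_mem e (mem_univ _), if_true, mul_sum, mul_ite, mul_zero]
  rw [pairSum, pairsAt, sum_filter, ← univ_product_univ, sum_product]
  simp only [sub_eq_iff_eq_add']

lemma finsum_sq_pairSum (e : I → G) (σ : I → Bool) :
    ∑ᶠ g ∈ {g : G | g ≠ 0}, pairSum e σ g ^ 2
      = ∑ g ∈ (displacements e).erase 0, pairSum e σ g ^ 2 := by
  apply finsum_mem_eq_sum_of_inter_support_eq
  ext g
  simp only [Set.mem_inter_iff, Set.mem_ofPred_eq, coe_erase, Set.mem_sdiff, mem_coe,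
    Set.mem_singleton_iff, mem_support, and_congr_left_iff]
  intro hg
  suffices g ∈ displacements e by tauto
  obtain ⟨p, hp, -⟩ := exists_ne_zero_of_sum_ne_zero (pow_ne_zero_iff two_ne_zero |>.mp hg)
  exact mem_image.mpr ⟨p, mem_univ p, (mem_filter.mp hp).2⟩

variable [DecidableEq I]

lemma sum_sq_pairSum [IsAddTorsionFree G] (e : I → G) {g : G} (hg : g ≠ 0) :
    ∑ σ : I → Bool, pairSum e σ g ^ 2 = 2 ^ Fintype.card I * (#(pairsAt e g) : ℝ) := by
  have hdiag {p : I × I} (hp : p ∈ pairsAt e g) : p.1 ≠ p.2 := by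
    rintro h
    simp [pairsAt, h, eq_comm, hg] at hp
  have hswap {p q : I × I} (hp : p ∈ pairsAt e g) (hq : q ∈ pairsAt e g) : p ≠ q.swap := by
    rintro rfl
    simp only [pairsAt, mem_filter, mem_univ, true_and, Prod.fst_swap, Prod.snd_swap] at hp hq
    have : 2 • g = 0 := by
      rw [two_nsmul]
      nth_rw 1 [← hp]
      rw [← hq]
      abel
    exact hg (two_nsmul_eq_zero.mp this)
  simp only [pairSum, sq, sum_mul_sum]
  rw [sum_comm, sum_congr rfl fun p hp => (sum_comm).trans (sum_congr rfl fun q hq =>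
    sum_boolSign_pair_mul_pair (hdiag hp) (hdiag hq) (hswap hp hq))]
  simp [sum_ite_eq, mul_comm]

lemma sum_card_pairsAt (e : I → G) (he : Injective e) :
    ∑ g ∈ (displacements e).erase 0, (#(pairsAt e g) : ℝ)
      = (Fintype.card I : ℝ) ^ 2 - Fintype.card I := by
  obtain hI | ⟨⟨i⟩⟩ := isEmpty_or_nonempty I
  · simp [displacements]
  have h0 : (0 : G) ∈ displacements e := mem_image.mpr ⟨(i, i), mem_univ _, sub_self _⟩
  have hpairs0 : pairsAt e 0 = (univ : Finset I).diag := by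
    ext p
    simp [pairsAt, sub_eq_zero, he.eq_iff, eq_comm]
  have htotal : (Fintype.card I : ℝ) ^ 2 = ∑ g ∈ displacements e, (#(pairsAt e g) : ℝ) := by
    have := card_eq_sum_card_image (fun p : I × I => e p.2 - e p.1) univ
    rw [card_univ, Fintype.card_prod] at this
    exact_mod_cast (sq _).trans this
  rw [sum_erase_eq_sub h0, ← htotal, hpairs0, diag_card, card_univ]

theorem sum_finsum_sq_correlation_placeSigns [IsAddTorsionFree G] (e : I → G) (he : Injective e) :
    ∑ σ : I → Bool, ∑ᶠ g ∈ {g : G | g ≠ 0},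
        (∑ᶠ x, placeSigns e σ x * placeSigns e σ (x + g)) ^ 2
      = 2 ^ Fintype.card I * ((Fintype.card I : ℝ) ^ 2 - Fintype.card I) := by
  simp only [finsum_placeSigns_mul_placeSigns_add, finsum_sq_pairSum]
  rw [sum_comm, sum_congr rfl fun g hg => sum_sq_pairSum e (ne_of_mem_erase hg), ← mul_sum,
    sum_card_pairsAt e he]

end Placement

def cellPos (n m : ℕ) (i : Fin n × Fin m) : ℤ × ℤ := ((i.1 : ℤ), (i.2 : ℤ))

lemma cellPos_injective (n m : ℕ) : Injective (cellPos n m) := by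
  rintro ⟨i, j⟩ ⟨i', j'⟩ h
  simp_all [cellPos, Fin.val_inj]

lemma signArray_eq_placeSigns (n m : ℕ) (σ : Fin n × Fin m → Bool) :
    signArray n m σ = placeSigns (cellPos n m) σ := by
  funext x
  by_cases hx : 0 ≤ x.1 ∧ x.1 < (n : ℤ) ∧ 0 ≤ x.2 ∧ x.2 < (m : ℤ)
  · set i : Fin n × Fin m := (⟨x.1.toNat, by omega⟩, ⟨x.2.toNat, by omega⟩)
    have hxi : x = cellPos n m i :=
      Prod.ext (by simp [cellPos, i]; omega) (by simp [cellPos, i]; omega)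
    have hcell (j : Fin n × Fin m) : cellPos n m j = x ↔ j = i := by
      rw [hxi, (cellPos_injective n m).eq_iff]
    rw [signArray, dif_pos hx, placeSigns]
    simp only [hcell, sum_ite_eq', mem_univ, if_true]
    rfl
  · rw [signArray, dif_neg hx, placeSigns]
    refine (sum_eq_zero fun j _ => if_neg ?_).symm
    rintro rfl
    simp [cellPos] at hx

lemma autocorr_eq_finsum (A : ℤ × ℤ → ℝ) (hA : (support A).Finite) (u v : ℤ) :
    autocorr A u v = ∑ᶠ x, A x * A (x + (u, v)) := by
  rw [autocorr, finsum_curry _ (hA.subset (support_mul_subset_left _ _))]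
  rfl

lemma one_div_meritFactor_signArray (n m : ℕ) (σ : Fin n × Fin m → Bool) :
    1 / meritFactor n m (signArray n m σ)
      = (∑ᶠ g ∈ {g : ℤ × ℤ | g ≠ 0},
          (∑ᶠ x, placeSigns (cellPos n m) σ x * placeSigns (cellPos n m) σ (x + g)) ^ 2)
        / ((n : ℝ) * m) ^ 2 := by
  have hA : (support (signArray n m σ)).Finite := by
    rw [signArray_eq_placeSigns]
    exact (univ.image _).finite_toSet.subset (support_placeSigns_subset _ σ)
  rw [meritFactor, one_div_div]
  simp only [autocorr_eq_finsum _ hA, Prod.mk_zero_zero, Int.cast_natCast]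
  rw [signArray_eq_placeSigns]

/-- The mean of `1/F(A)` over all `2^{nm}` binary arrays `A` of size `n × m`
equals `1 - 1/(nm)`. -/
theorem stmt0 (n m : ℕ) (h : 1 < n * m) :
    (∑ σ : Fin n × Fin m → Bool, 1 / meritFactor n m (signArray n m σ)) / 2 ^ (n * m)
      = 1 - 1 / (n * m : ℝ) := by
  obtain ⟨hn, hm⟩ : (n : ℝ) ≠ 0 ∧ (m : ℝ) ≠ 0 := by
    constructor <;> (norm_cast; rintro rfl; simp at h)
  simp only [one_div_meritFactor_signArray]
  rw [← sum_div, sum_finsum_sq_correlation_placeSigns _ (cellPos_injective n m),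
    Fintype.card_prod, Fintype.card_fin, Fintype.card_fin]
  push_cast
  field_simp
end
end

section
/- Let A be a binary sequence of length n > 1 and B a binary sequence of length m > 1. Then 1/F(A×B) = (1 + 1/F(A))(1 + 1/F(B)) - 1. -/
open scoped BigOperators

noncomputable section

/-!
The autocorrelation of a product array factors, `C_{A×B}(u, v) = C_A(u) C_B(v)`, so the total
energy `∑ C²` of `A×B` is the product of the energies of `A` and `B`. For a binary sequence the
peak is `C(0) = n`, whence `1 + 1/F = (∑ C²) / C(0)²` is multiplicative, which is the claim.
-/

theorem finsum_mem_ne_eq_finsum_sub {α M : Type*} [AddCommGroup M] {f : α → M}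
    (hf : f.HasFiniteSupport) (a : α) :
    ∑ᶠ x ∈ {x | x ≠ a}, f x = ∑ᶠ x, f x - f a := by
  rw [← add_finsum_cond_ne a hf]
  simp only [Set.mem_ofPred_eq, add_sub_cancel_left]

section FiniteSupportProd

variable {α β R : Type*} [NonUnitalNonAssocSemiring R] {f : α → R} {g : β → R}

theorem Function.HasFiniteSupport.fst_mul_snd (hf : f.HasFiniteSupport)
    (hg : g.HasFiniteSupport) : (fun p : α × β => f p.1 * g p.2).HasFiniteSupport :=
  (hf.prod hg).subset fun _ hp => ⟨left_ne_zero_of_mul hp, right_ne_zero_of_mul hp⟩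

theorem finsum_mul_finsum_eq_finsum_prod [NoZeroDivisors R] (hf : f.HasFiniteSupport)
    (hg : g.HasFiniteSupport) :
    (∑ᶠ x, f x) * ∑ᶠ y, g y = ∑ᶠ p : α × β, f p.1 * g p.2 := by
  rw [finsum_curry _ (hf.fst_mul_snd hg), finsum_mul]
  simp only [mul_finsum]

end FiniteSupportProd

theorem autocorr_mul (a b : ℤ → ℝ) (u v : ℤ) :
    autocorr (fun x => a x.1 * b x.2) u v = seqAutocorr a u * seqAutocorr b v := by
  rw [autocorr, seqAutocorr, finsum_mul]
  congr 1 with i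
  rw [seqAutocorr, mul_finsum]
  congr 1 with j
  ring

theorem IsSeq.support_seqAutocorr_subset {n : ℤ} {a : ℤ → ℝ} (ha : IsSeq n a) :
    (seqAutocorr a).support ⊆ Set.Ioo (-n) n := by
  intro u hu
  obtain ⟨i, hi⟩ : ∃ i, a i * a (i + u) ≠ 0 := by
    by_contra! h
    exact hu (by simp [seqAutocorr, h])
  have h₁ := ha i (left_ne_zero_of_mul hi)
  have h₂ := ha (i + u) (right_ne_zero_of_mul hi)
  constructor <;> omega

theorem IsSeq.hasFiniteSupport_seqAutocorr_sq {n : ℤ} {a : ℤ → ℝ} (ha : IsSeq n a) :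
    (fun u => seqAutocorr a u ^ 2).HasFiniteSupport := by
  rw [Function.HasFiniteSupport, Function.support_pow _ two_ne_zero]
  exact (Set.finite_Ioo _ _).subset ha.support_seqAutocorr_subset

theorem IsBinarySeq.seqAutocorr_zero {n : ℤ} {a : ℤ → ℝ} (hn : 0 ≤ n) (ha : IsBinarySeq n a) :
    seqAutocorr a 0 = n := by
  have hsupp : (fun i => a i * a (i + 0)).support ⊆ Finset.Ico 0 n := fun i hi => by
    simpa using ha.1 i (left_ne_zero_of_mul hi)
  rw [seqAutocorr, finsum_eq_sum_of_support_subset _ hsupp]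
  have hsq : ∀ i ∈ Finset.Ico 0 n, a i * a (i + 0) = 1 := fun i hi => by
    rw [Finset.mem_Ico] at hi
    rcases ha.2 i hi.1 hi.2 with h | h <;> simp [h]
  rw [Finset.sum_congr rfl hsq, Finset.sum_const, Int.card_Ico, nsmul_one, sub_zero]
  exact_mod_cast Int.toNat_of_nonneg hn

theorem IsBinarySeq.one_div_seqMeritFactor {n : ℤ} {a : ℤ → ℝ} (hn : 0 < n)
    (ha : IsBinarySeq n a) :
    1 / seqMeritFactor n a = (∑ᶠ u, seqAutocorr a u ^ 2) / n ^ 2 - 1 := by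
  have hn' : (n : ℝ) ≠ 0 := by exact_mod_cast hn.ne'
  rw [seqMeritFactor, one_div_div,
    finsum_mem_ne_eq_finsum_sub ha.1.hasFiniteSupport_seqAutocorr_sq, ha.seqAutocorr_zero hn.le]
  field_simp

theorem one_div_meritFactor_mul {n m : ℤ} {a b : ℤ → ℝ} (hn : 0 < n) (hm : 0 < m)
    (ha : IsBinarySeq n a) (hb : IsBinarySeq m b) :
    1 / meritFactor n m (fun x => a x.1 * b x.2) =
      (∑ᶠ u, seqAutocorr a u ^ 2) * (∑ᶠ v, seqAutocorr b v ^ 2) / (n * m) ^ 2 - 1 := by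
  have hnm : (n : ℝ) * m ≠ 0 := by exact_mod_cast (mul_pos hn hm).ne'
  have hsq (p : ℤ × ℤ) : autocorr (fun x => a x.1 * b x.2) p.1 p.2 ^ 2 =
      seqAutocorr a p.1 ^ 2 * seqAutocorr b p.2 ^ 2 := by
    rw [autocorr_mul, mul_pow]
  have hfin := ha.1.hasFiniteSupport_seqAutocorr_sq
  have hfin' := hb.1.hasFiniteSupport_seqAutocorr_sq
  rw [meritFactor, one_div_div, finsum_mul_finsum_eq_finsum_prod hfin hfin']
  simp only [hsq]
  rw [finsum_mem_ne_eq_finsum_sub (hfin.fst_mul_snd hfin'), ha.seqAutocorr_zero hn.le,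
    hb.seqAutocorr_zero hm.le]
  field_simp

/-- For binary sequences `a` of length `n > 1` and `b` of length `m > 1`,
`1/F(A×B) = (1 + 1/F(A))(1 + 1/F(B)) - 1`. -/
theorem stmt2 (n m : ℤ) (hn : 1 < n) (hm : 1 < m) (a b : ℤ → ℝ)
    (ha : IsBinarySeq n a) (hb : IsBinarySeq m b) :
    1 / meritFactor n m (fun x => a x.1 * b x.2)
      = (1 + 1 / seqMeritFactor n a) * (1 + 1 / seqMeritFactor m b) - 1 := by
  have hn' : (n : ℝ) ≠ 0 := by exact_mod_cast (by omega : n ≠ 0)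
  have hm' : (m : ℝ) ≠ 0 := by exact_mod_cast (by omega : m ≠ 0)
  rw [one_div_meritFactor_mul (by omega) (by omega) ha hb,
    ha.one_div_seqMeritFactor (by omega), hb.one_div_seqMeritFactor (by omega)]
  field_simp
  ring
end
end

section
/- Let d > 1 be an odd integer and let A ∈ ℂ[x] be a polynomial of degree at most d-1. Then for every integer j, |A(ζ_d^j)| ≤ (2 log d) · max_{0≤k<d} |A(ζ_d^{2k})|, where ζ_d = e^{iπ/d}. -/
open scoped BigOperators

noncomputable section

/-!
Put `ω = ζ_d²`, a primitive `d`-th root of unity. Interpolating `A` at the nodes `c ω^k` gives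
`d A(c z) = ∑_k A(c ω^k) ∑_{i<d} (z ω^{-k})^i`. For even `j`, `ζ_d^j` is itself a power of `ω`.
For odd `j`, taking `c = ζ_d^{j-1}`, `z = ζ_d` and the primitive root `ω⁻¹` makes the inner sums
geometric sums at `w = ζ_d^{2k+1}`, a root of `X^d + 1`, where they have modulus
`2 / |w - 1| = 1 / sin((2k+1)π/2d)`. By Jordan's inequality `sin x ≥ 2x/π` and the symmetry
`k ↦ d - 1 - k`, the sum of these cosecants is at most `1 + 2d ∑_{k<(d-1)/2} 1/(2k+1)`, and this
odd harmonic sum grows like `(log d)/2`, which leaves room up to `2 d log d` once `d ≥ 5`.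
-/

open Finset Polynomial Real

lemma IsPrimitiveRoot.sum_pow_mul_inv_pow {K : Type*} [Field K] {η : K} {d : ℕ}
    (hη : IsPrimitiveRoot η d) {i i' : ℕ} (hi : i < d) (hi' : i' < d) :
    ∑ k ∈ range d, (η ^ k) ^ i' * ((η ^ k)⁻¹) ^ i = if i' = i then (d : K) else 0 := by
  have hη0 : η ≠ 0 := hη.ne_zero (by omega)
  have hsummand : ∀ k, (η ^ k) ^ i' * ((η ^ k)⁻¹) ^ i = (η ^ i' * (η ^ i)⁻¹) ^ k := fun k => by
    ring
  simp_rw [hsummand]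
  split_ifs with h
  · simp [h, hη0]
  · have hne : η ^ i' * (η ^ i)⁻¹ ≠ 1 := by
      rw [Ne, mul_inv_eq_one₀ (pow_ne_zero _ hη0)]
      exact fun heq => h (hη.pow_inj hi' hi heq)
    rw [geom_sum_eq hne, mul_pow, inv_pow, ← pow_mul, ← pow_mul, mul_comm i', mul_comm i,
      pow_mul, pow_mul, hη.pow_eq_one]
    simp

theorem IsPrimitiveRoot.natCast_mul_eval_mul_eq_sum {K : Type*} [Field K] {η : K} {d : ℕ}
    (hη : IsPrimitiveRoot η d) {A : K[X]} (hA : A.natDegree < d) (c z : K) :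
    d * A.eval (c * z)
      = ∑ k ∈ range d, A.eval (c * η ^ k) * ∑ i ∈ range d, (z * (η ^ k)⁻¹) ^ i := by
  calc (d : K) * A.eval (c * z)
      = ∑ i' ∈ range d, ∑ i ∈ range d,
          A.coeff i' * c ^ i' * z ^ i * if i' = i then (d : K) else 0 := by
        simp_rw [mul_ite, mul_zero, sum_ite_eq, eval_eq_sum_range' hA, mul_sum]
        refine sum_congr rfl fun i' hi' => ?_
        rw [if_pos hi']
        ring
    _ = ∑ i' ∈ range d, ∑ i ∈ range d, A.coeff i' * c ^ i' * z ^ i *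
          ∑ k ∈ range d, (η ^ k) ^ i' * ((η ^ k)⁻¹) ^ i := by
        refine sum_congr rfl fun i' hi' => sum_congr rfl fun i hi => ?_
        rw [hη.sum_pow_mul_inv_pow (mem_range.1 hi) (mem_range.1 hi')]
    _ = ∑ k ∈ range d, ∑ i' ∈ range d, ∑ i ∈ range d,
          A.coeff i' * (c * η ^ k) ^ i' * (z * (η ^ k)⁻¹) ^ i := by
        simp_rw [mul_sum]
        refine (sum_congr rfl fun i' _ => sum_comm).trans (sum_comm.trans
          (sum_congr rfl fun k _ => sum_congr rfl fun i' _ => sum_congr rfl fun i _ => ?_))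
        ring
    _ = _ := by
        simp_rw [eval_eq_sum_range' hA, sum_mul_sum]

lemma IsPrimitiveRoot.le_sup'_zpow {K α : Type*} [Field K] [SemilatticeSup α] {ω : K}
    {d : ℕ} (hω : IsPrimitiveRoot ω d) (hd : (range d).Nonempty) (f : K → α) (m : ℤ) :
    f (ω ^ m) ≤ (range d).sup' hd (fun k => f (ω ^ k)) := by
  have : NeZero d := ⟨by simpa using hd.ne_empty⟩
  obtain ⟨k, hk, hωk⟩ := hω.eq_pow_of_pow_eq_one (ξ := ω ^ m) (by
    rw [← zpow_natCast, ← zpow_mul, mul_comm, zpow_mul, zpow_natCast, hω.pow_eq_one, one_zpow])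
  rw [← hωk]
  exact le_sup' (fun k => f (ω ^ k)) (mem_range.2 hk)

lemma norm_geom_sum_of_pow_eq_neg_one {w : ℂ} {d : ℕ} (hw : w ^ d = -1) :
    ‖∑ i ∈ range d, w ^ i‖ = 2 / ‖w - 1‖ := by
  have hw1 : w ≠ 1 := by
    rintro rfl
    norm_num at hw
  rw [geom_sum_eq hw1, hw, norm_div]
  norm_num

lemma zeta_zpow_eq_exp (d : ℕ) (m : ℤ) :
    zeta d ^ m = Complex.exp (Complex.I * ↑(m * π / d)) := by
  rw [zeta, ← Complex.exp_int_mul]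
  push_cast
  ring_nf

lemma isPrimitiveRoot_zeta {d : ℕ} (hd : d ≠ 0) : IsPrimitiveRoot (zeta d) (2 * d) := by
  convert Complex.isPrimitiveRoot_exp (2 * d) (by omega) using 2
  rw [zeta]
  push_cast
  field_simp

lemma norm_zeta_zpow_sub_one (d : ℕ) (m : ℤ) :
    ‖zeta d ^ m - 1‖ = 2 * |sin (m * π / (2 * d))| := by
  rw [zeta_zpow_eq_exp, Complex.norm_exp_I_mul_ofReal_sub_one, norm_mul, Real.norm_eq_abs,
    Real.norm_eq_abs, abs_two]
  ring_nf

lemma norm_geom_sum_zeta_zpow_of_odd {d : ℕ} (hd : d ≠ 0) {m : ℤ} (hm : Odd m) :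
    ‖∑ i ∈ range d, (zeta d ^ m) ^ i‖ = |sin (m * π / (2 * d))|⁻¹ := by
  have hζd : zeta d ^ d = -1 :=
    ((isPrimitiveRoot_zeta hd).pow (by omega) (mul_comm 2 d)).eq_neg_one_of_two_right
  have hw : (zeta d ^ m) ^ d = -1 := by
    rw [← zpow_natCast, ← zpow_mul, mul_comm, zpow_mul, zpow_natCast, hζd, hm.neg_one_zpow]
  rw [norm_geom_sum_of_pow_eq_neg_one hw, norm_zeta_zpow_sub_one]
  ring

lemma natCast_mul_norm_eval_zeta_zpow_odd_le {d : ℕ} (hd : d ≠ 0) {A : ℂ[X]}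
    (hA : A.natDegree < d) {M : ℝ} (hM : ∀ m : ℤ, ‖A.eval ((zeta d ^ 2) ^ m)‖ ≤ M) (t : ℤ) :
    d * ‖A.eval (zeta d ^ (2 * t + 1))‖
      ≤ M * ∑ k ∈ range d, |sin ((2 * k + 1) * π / (2 * d))|⁻¹ := by
  set ω := zeta d ^ 2 with hω_def
  have hω : IsPrimitiveRoot ω d := (isPrimitiveRoot_zeta hd).pow (by omega) rfl
  have hζ0 : zeta d ≠ 0 := Complex.exp_ne_zero _
  have hpoint : ω ^ t * zeta d = zeta d ^ (2 * t + 1) := by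
    rw [zpow_add₀ hζ0, zpow_one, zpow_mul]
    norm_cast
  have hnode : ∀ k : ℕ, ω ^ t * ω⁻¹ ^ k = ω ^ (t - k) := fun k => by
    rw [zpow_sub₀ (pow_ne_zero _ hζ0), inv_pow, zpow_natCast, div_eq_mul_inv]
  have hgeom : ∀ k : ℕ, ‖∑ i ∈ range d, (zeta d * (ω⁻¹ ^ k)⁻¹) ^ i‖
      = |sin ((2 * k + 1) * π / (2 * d))|⁻¹ := fun k => by
    have : zeta d * (ω⁻¹ ^ k)⁻¹ = zeta d ^ (2 * (k : ℤ) + 1) := by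
      rw [inv_pow, inv_inv, hω_def, ← pow_mul, zpow_add₀ hζ0, zpow_one, mul_comm]
      norm_cast
    rw [this, norm_geom_sum_zeta_zpow_of_odd hd (odd_two_mul_add_one _)]
    push_cast
    rfl
  calc (d : ℝ) * ‖A.eval (zeta d ^ (2 * t + 1))‖
      = ‖∑ k ∈ range d,
          A.eval (ω ^ t * ω⁻¹ ^ k) * ∑ i ∈ range d, (zeta d * (ω⁻¹ ^ k)⁻¹) ^ i‖ := by
        rw [← hω.inv.natCast_mul_eval_mul_eq_sum hA, hpoint, norm_mul, Complex.norm_natCast]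
    _ ≤ ∑ k ∈ range d, M * |sin ((2 * k + 1) * π / (2 * d))|⁻¹ := by
        refine (norm_sum_le _ _).trans (sum_le_sum fun k _ => ?_)
        rw [norm_mul, hnode, hgeom]
        exact mul_le_mul_of_nonneg_right (hM _) (by positivity)
    _ = M * ∑ k ∈ range d, |sin ((2 * k + 1) * π / (2 * d))|⁻¹ := (mul_sum ..).symm

lemma inv_abs_sin_le {d k : ℕ} (hk : 2 * k + 1 ≤ d) :
    |sin ((2 * k + 1) * π / (2 * d))|⁻¹ ≤ d / (2 * k + 1) := by
  have hk' : (2 * k + 1 : ℝ) ≤ d := by exact_mod_cast hk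
  have hd : (0 : ℝ) < d := by linarith
  have hjordan : 2 / π * ((2 * k + 1) * π / (2 * d)) ≤ sin ((2 * k + 1) * π / (2 * d)) :=
    mul_le_sin (by positivity) (by rw [div_le_div_iff₀ (by positivity) two_pos]; nlinarith [pi_pos])
  rw [show 2 / π * ((2 * k + 1) * π / (2 * d)) = (2 * k + 1) / d by field_simp] at hjordan
  rw [← inv_div (2 * k + 1 : ℝ)]
  exact inv_anti₀ (by positivity) (hjordan.trans (le_abs_self _))

lemma sum_range_inv_two_mul_add_one_add_le_log {e : ℕ} (he : 2 ≤ e) :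
    ∑ k ∈ range e, (2 * k + 1 : ℝ)⁻¹ + (2 * (2 * e + 1) : ℝ)⁻¹ ≤ log (2 * e + 1) := by
  induction e, he using Nat.le_induction with
  | base =>
    have h54 := one_sub_inv_le_log_of_pos (show (0 : ℝ) < 5 / 2 ^ 2 by norm_num)
    rw [log_div (by norm_num) (by norm_num), log_pow] at h54
    norm_num [sum_range_succ] at h54 ⊢
    linarith [log_two_gt_d9]
  | succ e he ih =>
    have hlog := one_sub_inv_le_log_of_pos (show (0 : ℝ) < (2 * e + 3) / (2 * e + 1) by positivity)
    rw [log_div (by positivity) (by positivity), inv_div] at hlog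
    have hstep : (2 * e + 1 : ℝ)⁻¹ + (2 * (2 * e + 3) : ℝ)⁻¹ - (2 * (2 * e + 1) : ℝ)⁻¹
        ≤ 1 - (2 * e + 1) / (2 * e + 3) := by
      field_simp
      nlinarith
    rw [sum_range_succ]
    push_cast
    rw [show (2 * (e + 1 : ℝ) + 1) = 2 * e + 3 by ring]
    linarith

lemma sum_range_two_mul_add_one_of_symm {M : Type*} [AddCommMonoid M] (f : ℕ → M) (e : ℕ)
    (hf : ∀ k < e, f (2 * e - k) = f k) :
    ∑ k ∈ range (2 * e + 1), f k = 2 • ∑ k ∈ range e, f k + f e := by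
  have hupper : ∑ k ∈ range e, f (e + 1 + k) = ∑ k ∈ range e, f k := by
    rw [← sum_range_reflect f e]
    refine sum_congr rfl fun k hk => ?_
    rw [mem_range] at hk
    rw [← hf (e - 1 - k) (by omega)]
    congr 1
    omega
  rw [show 2 * e + 1 = e + 1 + e by ring, sum_range_add, hupper, sum_range_succ, two_nsmul]
  abel

theorem sum_range_inv_abs_sin_le_two_mul_log {d : ℕ} (hd : 1 < d) (hodd : Odd d) :
    ∑ k ∈ range d, |sin ((2 * k + 1) * π / (2 * d))|⁻¹ ≤ 2 * d * log d := by
  obtain ⟨e, rfl⟩ := hodd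
  set f : ℕ → ℝ := fun k => |sin ((2 * k + 1) * π / (2 * (2 * e + 1 : ℕ)))|⁻¹ with hf
  have hsymm : ∀ k < e, f (2 * e - k) = f k := by
    intro k hk
    simp only [hf]
    rw [Nat.cast_sub (by omega), ← sin_pi_sub]
    congr 3
    push_cast
    field_simp
    ring
  have hmid : f e = 1 := by
    simp only [hf]
    rw [show (2 * e + 1) * π / (2 * (2 * e + 1 : ℕ)) = π / 2 by push_cast; field_simp,
      sin_pi_div_two, abs_one, inv_one]
  rw [sum_range_two_mul_add_one_of_symm f e hsymm, hmid, nsmul_eq_mul]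
  push_cast
  obtain rfl | he := (show e = 1 ∨ 2 ≤ e by omega)
  · -- Jordan's bound is too weak for `d = 3`; there the sum is exactly `2 + 1 + 2`.
    have h3 := one_sub_inv_le_log_of_pos (show (0 : ℝ) < 3 / 2 by norm_num)
    rw [log_div (by norm_num) (by norm_num)] at h3
    have hf0 : f 0 = 2 := by
      simp only [hf]
      norm_num
    norm_num [hf0]
    linarith [log_two_gt_d9]
  · have hterms : ∑ k ∈ range e, f k ≤ (2 * e + 1) * ∑ k ∈ range e, (2 * k + 1 : ℝ)⁻¹ := by
      rw [mul_sum]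
      refine sum_le_sum fun k hk => ?_
      have := inv_abs_sin_le (show 2 * k + 1 ≤ 2 * e + 1 by grind)
      rw [div_eq_mul_inv] at this
      simp only [hf]
      exact_mod_cast this
    have hlog := sum_range_inv_two_mul_add_one_add_le_log he
    calc 2 * ∑ k ∈ range e, f k + 1
        ≤ 2 * (2 * e + 1) * (∑ k ∈ range e, (2 * k + 1 : ℝ)⁻¹ + (2 * (2 * e + 1) : ℝ)⁻¹) := by
          rw [mul_add, mul_inv_cancel₀ (by positivity)]
          linarith
      _ ≤ 2 * (2 * e + 1) * log (2 * e + 1) := by gcongr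

lemma one_le_two_mul_log {d : ℕ} (hd : 1 < d) : 1 ≤ 2 * log d := by
  have : log 2 ≤ log d := log_le_log two_pos (by exact_mod_cast hd)
  linarith [log_two_gt_d9]

/-- For odd `d > 1` and a polynomial `A ∈ ℂ[x]` of degree at most `d-1`,
`|A(ζ_d^j)| ≤ (2 log d) max_{0 ≤ k < d} |A(ζ_d^{2k})|`. -/
theorem stmt8 (d : ℕ) (hd : 1 < d) (hodd : Odd d) (A : Polynomial ℂ)
    (hdeg : A.natDegree ≤ d - 1) (j : ℤ) :
    ‖A.eval (zeta d ^ j)‖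
      ≤ (2 * Real.log d) *
          (Finset.range d).sup' (Finset.nonempty_range_iff.mpr (by omega))
            (fun k => ‖A.eval (zeta d ^ (2 * k))‖) := by
  have hd0 : d ≠ 0 := by omega
  set M := (Finset.range d).sup' (Finset.nonempty_range_iff.mpr hd0)
    (fun k => ‖A.eval (zeta d ^ (2 * k))‖)
  have hM : ∀ m : ℤ, ‖A.eval ((zeta d ^ 2) ^ m)‖ ≤ M := fun m => by
    refine (((isPrimitiveRoot_zeta hd0).pow (by omega) rfl).le_sup'_zpow
      (nonempty_range_iff.mpr hd0) (fun z => ‖A.eval z‖) m).trans_eq ?_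
    simp only [M, pow_mul]
  have hM0 : 0 ≤ M := (norm_nonneg _).trans (hM 0)
  obtain ⟨t, rfl | rfl⟩ := j.even_or_odd'
  · calc ‖A.eval (zeta d ^ (2 * t))‖ = ‖A.eval ((zeta d ^ 2) ^ t)‖ := by
          rw [zpow_mul]
          norm_cast
      _ ≤ M := hM t
      _ ≤ 2 * log d * M := le_mul_of_one_le_left hM0 (one_le_two_mul_log hd)
  · refine le_of_mul_le_mul_left ?_ (show (0 : ℝ) < d by positivity)
    calc (d : ℝ) * ‖A.eval (zeta d ^ (2 * t + 1))‖
        ≤ M * ∑ k ∈ range d, |sin ((2 * k + 1) * π / (2 * d))|⁻¹ :=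
          natCast_mul_norm_eval_zeta_zpow_odd_le hd0 (by omega) hM t
      _ ≤ M * (2 * d * log d) :=
          mul_le_mul_of_nonneg_left (sum_range_inv_abs_sin_le_two_mul_log hd hodd) hM0
      _ = d * (2 * log d * M) := by ring
end
end

section
/- Let p be an odd prime, let χ be the quadratic character of GF(p²), let {α,α'} be a basis for GF(p²) over GF(p), and let Z be the corresponding ternary quadratic-residue array of size p×p with generating function Z(x,y). Then there exists a basis {β,β'} for GF(p²) over GF(p) such that Z(ε_k, ε_ℓ) = (-1)^{(p+1)/2} · p · χ(kβ + ℓβ') for all integers k, ℓ, where ε_j = e^{2πij/p}. -/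
open scoped BigOperators

noncomputable section

open Classical in
/-- The quadratic character of `GF(p²)`. -/
def quadChar (p : ℕ) [Fact p.Prime] (a : GaloisField p 2) : ℝ :=
  if a = 0 then 0 else if IsSquare a then 1 else -1

open Classical in
/-- The ternary quadratic-residue array of size `p × p` associated with the basis `B`
of `GF(p²)` over `GF(p)`. -/
def qrArray (p : ℕ) [Fact p.Prime]
    (B : Module.Basis (Fin 2) (ZMod p) (GaloisField p 2)) : ℤ × ℤ → ℝ :=
  fun x => if 0 ≤ x.1 ∧ x.1 < p ∧ 0 ≤ x.2 ∧ x.2 < p then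
    quadChar p ((x.1 : ZMod p) • B 0 + (x.2 : ZMod p) • B 1) else 0

/-!
Write `ψ` for the standard additive character of `ZMod p`, so that `ε_k^i ε_ℓ^j = ψ(ki + ℓj)`. If
`{β, β'}` is the basis trace-dual to `{α, α'}` and `c = kβ + ℓβ'`, then `Tr(c a) = ki + ℓj` for
`a = iα + jα'`, so `Z(ε_k, ε_ℓ) = ∑_a χ(a) ψ(Tr(c a)) = χ(c) G`, where `G` is the Gauss sum of `χ`
and `ψ ∘ Tr`.

To evaluate `G`, write it as `∑_a ψ(Tr(a²))` and use the basis `{1, s}` of `GF(p²)`, where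
`s² = d` for a non-square `d` of `ZMod p` (every element of `ZMod p` is a square in `GF(p²)`, and
`Tr s = 0`). Then `Tr((x + ys)²) = 2x² + 2dy²`, so `G = g(2) g(2d)` with
`g(c) = ∑_x ψ(c x²) = χ_p(c) g(1)`, where `χ_p` is the quadratic character of `ZMod p`. Since
`g(1)² = χ_p(-1) p`, this gives `G = χ_p(d) χ_p(-1) p = (-1)^((p+1)/2) p`.
-/

open Finset Module

section QuadraticGaussSum

variable {R : Type*} [Field R] [Fintype R] {R' : Type*} [CommRing R']

theorem quadraticChar_ringHomComp_ne_one [DecidableEq R] [CharZero R'] (hR : ringChar R ≠ 2) :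
    (quadraticChar R).ringHomComp (Int.castRingHom R') ≠ 1 :=
  (MulChar.ringHomComp_ne_one_iff Int.cast_injective).mpr (quadraticChar_ne_one hR)

theorem gaussSum_mulShift_of_isQuadratic [IsDomain R'] {χ : MulChar R R'} (hχ : χ ≠ 1)
    (hq : χ.IsQuadratic) (ψ : AddChar R R') (c : R) :
    gaussSum χ (ψ.mulShift c) = χ c * gaussSum χ ψ := by
  rcases eq_or_ne c 0 with rfl | hc
  · simp [gaussSum, MulChar.sum_eq_zero_of_ne_one hχ, MulChar.map_zero]
  · have hsq : χ c * χ c = 1 := by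
      rw [← sq, ← MulChar.pow_apply' χ two_ne_zero, hq.sq_eq_one, MulChar.one_apply hc.isUnit]
    rw [← gaussSum_mulShift χ ψ (Units.mk0 c hc), Units.val_mk0, ← mul_assoc, hsq, one_mul]

-- `x ↦ x²` is `(1 + χ(b))`-to-one onto each `b`, and `∑_b ψ(b) = 0`.
theorem sum_addChar_sq_eq_gaussSum [IsDomain R'] [DecidableEq R] (hR : ringChar R ≠ 2)
    {ψ : AddChar R R'} (hψ : ψ ≠ 1) :
    ∑ x : R, ψ (x ^ 2) = gaussSum ((quadraticChar R).ringHomComp (Int.castRingHom R')) ψ := by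
  have hfiber (b : R) :
      ∑ x ∈ univ with x ^ 2 = b, ψ (x ^ 2) = ((quadraticChar R b : R') + 1) * ψ b := by
    rw [sum_congr rfl fun x hx => by rw [(mem_filter.mp hx).2], sum_const, nsmul_eq_mul]
    have hcard := congrArg (Int.cast : ℤ → R') (quadraticChar_card_sqrts hR b)
    rw [Int.cast_natCast, Int.cast_add, Int.cast_one, Set.toFinset_ofPred] at hcard
    rw [← hcard]
  rw [← sum_fiberwise univ (· ^ 2), sum_congr rfl fun b _ => hfiber b]
  simp only [add_mul, one_mul, sum_add_distrib, AddChar.sum_eq_zero_of_ne_one hψ, add_zero]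
  rfl

theorem sum_addChar_mul_sq_eq_mul_gaussSum [IsDomain R'] [CharZero R'] [DecidableEq R]
    (hR : ringChar R ≠ 2) {ψ : AddChar R R'} (hψ : ψ.IsPrimitive) {c : R} (hc : c ≠ 0) :
    ∑ x : R, ψ (c * x ^ 2) = (quadraticChar R).ringHomComp (Int.castRingHom R') c
      * gaussSum ((quadraticChar R).ringHomComp (Int.castRingHom R')) ψ := by
  rw [← gaussSum_mulShift_of_isQuadratic
    (quadraticChar_ringHomComp_ne_one hR) ((quadraticChar_isQuadratic R).comp _),
    ← sum_addChar_sq_eq_gaussSum hR (hψ hc)]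
  simp only [AddChar.mulShift_apply]

end QuadraticGaussSum

theorem Module.Basis.sum_eq_sum_sum_fin_two {K V M : Type*} [Semiring K] [Fintype K]
    [AddCommMonoid V] [Module K V] [Fintype V] [AddCommMonoid M] (b : Basis (Fin 2) K V)
    (f : V → M) : ∑ v, f v = ∑ x : K, ∑ y : K, f (x • b 0 + y • b 1) := by
  rw [← Fintype.sum_prod_type' (f := fun x y => f (x • b 0 + y • b 1))]
  refine (Fintype.sum_equiv ((finTwoArrowEquiv K).symm.trans b.equivFun.symm.toEquiv) _ _
    fun xy => ?_).symm
  simp [Basis.equivFun_symm_apply, Fin.sum_univ_two]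

theorem LinearMap.BilinForm.apply_smul_dualBasis_add_smul {K V : Type*} [Field K]
    [AddCommGroup V] [Module K V] {Bf : LinearMap.BilinForm K V} (hB : Bf.Nondegenerate)
    (b : Basis (Fin 2) K V) (k l x y : K) :
    Bf (k • Bf.dualBasis hB b 0 + l • Bf.dualBasis hB b 1) (x • b 0 + y • b 1)
      = k * x + l * y := by
  simp [apply_dualBasis_left]

theorem FiniteField.card_eq_two_mul_div_two_add_one {K : Type*} [Field K] [Fintype K]
    (hK : ringChar K ≠ 2) : Fintype.card K = 2 * (Fintype.card K / 2) + 1 := by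
  have := FiniteField.odd_card_of_char_ne_two hK
  omega

theorem FiniteField.pow_card_div_two_eq_neg_one_of_not_isSquare {K : Type*} [Field K] [Fintype K]
    [DecidableEq K] (hK : ringChar K ≠ 2) {d : K} (hd : ¬IsSquare d) :
    d ^ (Fintype.card K / 2) = -1 := by
  rw [← quadraticChar_eq_pow_of_char_ne_two' hK, quadraticChar_neg_one_iff_not_isSquare.mpr hd]
  simp

section QuadraticExtension

variable {K L : Type*} [Field K] [Field L] [Algebra K L]

theorem AddChar.compAddMonoidHom_trace_ne_one [FiniteDimensional K L] [Algebra.IsSeparable K L]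
    {R' : Type*} [CommMonoid R'] {ψ : AddChar K R'} (hψ : ψ ≠ 1) :
    ψ.compAddMonoidHom (Algebra.trace K L).toAddMonoidHom ≠ 1 := by
  refine fun h => hψ ?_
  ext t
  obtain ⟨a, rfl⟩ := Algebra.trace_surjective K L t
  simpa using DFunLike.congr_fun h a

theorem isSquare_algebraMap_of_finrank_eq_two [Fintype K] [Fintype L] (hK : ringChar K ≠ 2)
    (h2 : finrank K L = 2) (d : K) : IsSquare (algebraMap K L d) := by
  rcases eq_or_ne d 0 with rfl | hd
  · simp
  have hL : ringChar L ≠ 2 := by rwa [← Algebra.ringChar_eq K L]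
  rw [FiniteField.isSquare_iff hL ((map_ne_zero _).mpr hd), card_eq_pow_finrank (K := K), h2]
  set m := Fintype.card K / 2
  have hm := FiniteField.card_eq_two_mul_div_two_add_one hK
  have hexp : (2 * m + 1) ^ 2 / 2 = 2 * m * (m + 1) := by
    rw [show (2 * m + 1) ^ 2 = 2 * (2 * m * (m + 1)) + 1 by ring]; omega
  rw [hm, hexp, pow_mul, ← map_pow, show 2 * m = Fintype.card K - 1 by omega,
    FiniteField.pow_card_sub_one_eq_one d hd, map_one, one_pow]

-- By Euler's criterion `s ^ q = s * d ^ (q / 2) = -s`, and `Tr s = s + s ^ q`.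
theorem trace_eq_zero_of_sq_eq_algebraMap [Fintype K] [Finite L] (hK : ringChar K ≠ 2)
    (h2 : finrank K L = 2) {d : K} (hd : ¬IsSquare d) {s : L} (hs : s ^ 2 = algebraMap K L d) :
    Algebra.trace K L s = 0 := by
  classical
  have hfrob : s ^ Fintype.card K = -s := by
    rw [FiniteField.card_eq_two_mul_div_two_add_one hK, pow_succ, pow_mul, hs, ← map_pow,
      FiniteField.pow_card_div_two_eq_neg_one_of_not_isSquare hK hd]
    simp
  apply FaithfulSMul.algebraMap_injective K L
  rw [FiniteField.algebraMap_trace_eq_sum_pow, h2, Nat.card_eq_fintype_card]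
  simp [sum_range_succ, hfrob]

theorem linearIndependent_one_of_sq_eq_algebraMap {d : K} (hd : ¬IsSquare d) {s : L}
    (hs : s ^ 2 = algebraMap K L d) : LinearIndependent K ![1, s] := by
  rw [LinearIndependent.pair_iff]
  intro a b hab
  by_cases hb : b = 0
  · subst hb
    simpa using hab
  refine absurd ⟨-a / b, FaithfulSMul.algebraMap_injective K L ?_⟩ hd
  have hsol : s = algebraMap K L (-a / b) := by
    rw [map_div₀, map_neg, eq_div_iff ((map_ne_zero _).mpr hb)]
    rw [Algebra.smul_def, Algebra.smul_def, mul_one] at hab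
    linear_combination hab
  rw [map_mul, ← hsol, ← hs, sq]

theorem trace_sq_smul_one_add_smul [FiniteDimensional K L] (h2 : finrank K L = 2) {d : K}
    {s : L} (hs : s ^ 2 = algebraMap K L d) (htr : Algebra.trace K L s = 0) (x y : K) :
    Algebra.trace K L ((x • 1 + y • s) ^ 2) = 2 * x ^ 2 + 2 * d * y ^ 2 := by
  have hexpand :
      (x • 1 + y • s) ^ 2 = algebraMap K L (x ^ 2 + d * y ^ 2) + (2 * x * y) • s := by
    simp only [Algebra.smul_def, map_add, map_mul, map_pow, map_ofNat, mul_one]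
    linear_combination (algebraMap K L y) ^ 2 * hs
  rw [hexpand, map_add, Algebra.trace_algebraMap, map_smul, htr, h2]
  simp only [smul_zero, add_zero, nsmul_eq_mul, Nat.cast_ofNat]
  ring

theorem sum_addChar_trace_sq_eq_mul [Fintype K] [Fintype L] (hK : ringChar K ≠ 2)
    (h2 : finrank K L = 2) {d : K} (hd : ¬IsSquare d) {s : L} (hs : s ^ 2 = algebraMap K L d)
    {R' : Type*} [CommRing R'] (ψ : AddChar K R') :
    ∑ a : L, ψ (Algebra.trace K L (a ^ 2))
      = (∑ x : K, ψ (2 * x ^ 2)) * ∑ y : K, ψ (2 * d * y ^ 2) := by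
  have hli : LinearIndependent K ![1, s] := linearIndependent_one_of_sq_eq_algebraMap hd hs
  have hcard : Fintype.card (Fin 2) = finrank K L := by rw [h2, Fintype.card_fin]
  let b := basisOfLinearIndependentOfCardEqFinrank hli hcard
  rw [b.sum_eq_sum_sum_fin_two, sum_mul_sum]
  refine sum_congr rfl fun x _ => sum_congr rfl fun y _ => ?_
  rw [coe_basisOfLinearIndependentOfCardEqFinrank]
  simp only [Matrix.cons_val_zero, Matrix.cons_val_one]
  rw [trace_sq_smul_one_add_smul h2 hs (trace_eq_zero_of_sq_eq_algebraMap hK h2 hd hs),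
    AddChar.map_add_eq_mul]

theorem gaussSum_quadraticChar_trace_of_finrank_eq_two [Fintype K] [Fintype L] [DecidableEq K]
    [DecidableEq L] {R' : Type*} [CommRing R'] [IsDomain R'] [CharZero R']
    (hK : ringChar K ≠ 2) (h2 : finrank K L = 2) {ψ : AddChar K R'} (hψ : ψ.IsPrimitive) :
    gaussSum ((quadraticChar L).ringHomComp (Int.castRingHom R'))
        (ψ.compAddMonoidHom (Algebra.trace K L).toAddMonoidHom)
      = -(quadraticChar K (-1) : R') * Fintype.card K := by
  set χK := (quadraticChar K).ringHomComp (Int.castRingHom R')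
  have hL : ringChar L ≠ 2 := by rwa [← Algebra.ringChar_eq K L]
  have htwo : (2 : K) ≠ 0 := Ring.two_ne_zero hK
  obtain ⟨d, hd⟩ := FiniteField.exists_nonsquare hK
  have hd0 : d ≠ 0 := by rintro rfl; exact hd .zero
  obtain ⟨s, hs⟩ := isSquare_algebraMap_of_finrank_eq_two (L := L) hK h2 d
  rw [← sq, eq_comm] at hs
  have hχ2 : χK 2 * χK 2 = 1 := by
    rw [← map_mul, ← sq, MulChar.ringHomComp_apply, quadraticChar_sq_one' htwo, map_one]
  have hχd : χK d = -1 := by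
    rw [MulChar.ringHomComp_apply, quadraticChar_neg_one_iff_not_isSquare.mpr hd, map_neg, map_one]
  calc _ = ∑ a : L, ψ (Algebra.trace K L (a ^ 2)) :=
        (sum_addChar_sq_eq_gaussSum hL
          (AddChar.compAddMonoidHom_trace_ne_one (by simpa using hψ one_ne_zero))).symm
    _ = χK 2 * χK 2 * χK d * gaussSum χK ψ ^ 2 := by
        rw [sum_addChar_trace_sq_eq_mul hK h2 hd hs,
          sum_addChar_mul_sq_eq_mul_gaussSum hK hψ htwo,
          sum_addChar_mul_sq_eq_mul_gaussSum hK hψ (mul_ne_zero htwo hd0), map_mul]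
        ring
    _ = _ := by
        rw [hχ2, hχd, gaussSum_sq (quadraticChar_ringHomComp_ne_one hK)
          ((quadraticChar_isQuadratic K).comp _) hψ, MulChar.ringHomComp_apply]
        simp

end QuadraticExtension

theorem ZMod.sum_range_natCast {n : ℕ} [NeZero n] {M : Type*} [AddCommMonoid M]
    (f : ZMod n → M) : ∑ i ∈ range n, f i = ∑ x, f x :=
  sum_nbij' (fun i => (i : ZMod n)) ZMod.val (by simp) (by simp [ZMod.val_lt])
    (fun i hi => ZMod.val_cast_of_lt (mem_range.mp hi)) (by simp) (by simp)

theorem ZMod.neg_quadraticChar_neg_one_eq_neg_one_pow {p : ℕ} [Fact p.Prime] (hodd : Odd p) :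
    -((quadraticChar (ZMod p) (-1) : ℤ) : ℂ) = (-1) ^ ((p + 1) / 2) := by
  have hp : p % 2 = 1 := Nat.odd_iff.mp hodd
  have hK : ringChar (ZMod p) ≠ 2 := by rw [ZMod.ringChar_zmod_n]; omega
  rw [quadraticChar_neg_one hK, ZMod.card, ZMod.χ₄_eq_neg_one_pow hp,
    show (p + 1) / 2 = p / 2 + 1 by omega, pow_succ]
  push_cast
  ring

theorem eps_pow_eq_stdAddChar (p : ℕ) [NeZero p] (k : ℤ) (i : ℕ) :
    eps p k ^ i = ZMod.stdAddChar ((k : ZMod p) * (i : ZMod p)) := by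
  rw [show (k : ZMod p) * (i : ZMod p) = ((k * i : ℤ) : ZMod p) by push_cast; rfl,
    ZMod.stdAddChar_coe, eps, ← Complex.exp_nat_mul]
  push_cast
  ring_nf

theorem quadChar_eq_quadraticChar (p : ℕ) [Fact p.Prime] [Fintype (GaloisField p 2)]
    [DecidableEq (GaloisField p 2)] (a : GaloisField p 2) :
    quadChar p a = quadraticChar (GaloisField p 2) a := by
  simp only [quadChar, quadraticChar_apply, quadraticCharFun]
  split_ifs <;> norm_num

theorem genFun_qrArray_eps_eq_sum (p : ℕ) [Fact p.Prime]
    (B : Basis (Fin 2) (ZMod p) (GaloisField p 2)) (k l : ℤ) :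
    genFun p p (qrArray p B) (eps p k) (eps p l)
      = ∑ x : ZMod p, ∑ y : ZMod p, (quadChar p (x • B 0 + y • B 1) : ℂ)
          * ZMod.stdAddChar ((k : ZMod p) * x + (l : ZMod p) * y) := by
  rw [genFun, ← ZMod.sum_range_natCast]
  refine sum_congr rfl fun i hi => ?_
  rw [← ZMod.sum_range_natCast]
  refine sum_congr rfl fun j hj => ?_
  have hi' : (i : ℤ) < p := by exact_mod_cast mem_range.mp hi
  have hj' : (j : ℤ) < p := by exact_mod_cast mem_range.mp hj
  rw [qrArray, if_pos ⟨by positivity, hi', by positivity, hj'⟩, eps_pow_eq_stdAddChar,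
    eps_pow_eq_stdAddChar, mul_assoc, ← AddChar.map_add_eq_mul]
  push_cast
  rfl

theorem genFun_qrArray_eps_eq_gaussSum (p : ℕ) [Fact p.Prime] [Fintype (GaloisField p 2)]
    [DecidableEq (GaloisField p 2)] (B : Basis (Fin 2) (ZMod p) (GaloisField p 2)) (k l : ℤ) :
    let B' := (Algebra.traceForm (ZMod p) (GaloisField p 2)).dualBasis
      (traceForm_nondegenerate _ _) B
    genFun p p (qrArray p B) (eps p k) (eps p l)
      = gaussSum ((quadraticChar (GaloisField p 2)).ringHomComp (Int.castRingHom ℂ))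
          ((ZMod.stdAddChar.compAddMonoidHom (Algebra.trace (ZMod p) _).toAddMonoidHom).mulShift
            ((k : ZMod p) • B' 0 + (l : ZMod p) • B' 1)) := by
  intro B'
  rw [genFun_qrArray_eps_eq_sum, gaussSum, B.sum_eq_sum_sum_fin_two]
  simp only [B', AddChar.mulShift_apply, AddChar.compAddMonoidHom_apply,
    LinearMap.toAddMonoidHom_coe, ← Algebra.traceForm_apply,
    LinearMap.BilinForm.apply_smul_dualBasis_add_smul, quadChar_eq_quadraticChar]
  rfl

/-- The generating function of a ternary quadratic-residue array at `p`-th roots of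
unity: there is a basis `{β, β'}` of `GF(p²)` over `GF(p)` with
`Z(ε_k, ε_ℓ) = (-1)^{(p+1)/2} p χ(kβ + ℓβ')`. -/
theorem stmt10 (p : ℕ) [Fact p.Prime] (hodd : Odd p)
    (B : Module.Basis (Fin 2) (ZMod p) (GaloisField p 2)) :
    ∃ B' : Module.Basis (Fin 2) (ZMod p) (GaloisField p 2),
      ∀ k l : ℤ,
        genFun p p (qrArray p B) (eps p k) (eps p l)
          = (-1) ^ ((p + 1) / 2) * (p : ℂ) *
              ((quadChar p ((k : ZMod p) • B' 0 + (l : ZMod p) • B' 1) : ℝ) : ℂ) := by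
  classical
  let : Fintype (GaloisField p 2) := Fintype.ofFinite _
  have hK : ringChar (ZMod p) ≠ 2 := by
    rw [ZMod.ringChar_zmod_n]; rintro rfl; exact Nat.not_odd_iff_even.mpr even_two hodd
  have hF : ringChar (GaloisField p 2) ≠ 2 := by rwa [← Algebra.ringChar_eq (ZMod p)]
  refine ⟨(Algebra.traceForm _ _).dualBasis (traceForm_nondegenerate _ _) B, fun k l => ?_⟩
  rw [genFun_qrArray_eps_eq_gaussSum, gaussSum_mulShift_of_isQuadratic
      (quadraticChar_ringHomComp_ne_one hF) ((quadraticChar_isQuadratic _).comp _),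
    gaussSum_quadraticChar_trace_of_finrank_eq_two hK (GaloisField.finrank p two_ne_zero)
      (ZMod.isPrimitive_stdAddChar p),
    ZMod.neg_quadraticChar_neg_one_eq_neg_one_pow hodd, ZMod.card, quadChar_eq_quadraticChar,
    MulChar.ringHomComp_apply, eq_intCast]
  push_cast
  ring
end
end

section
/- Let p be an odd prime and define Γ(k,ℓ,m) = ∑_{i=0}^{p-1} ε_i² / ((1+ε_i)(ε_k+ε_i)(ε_ℓ+ε_i)(ε_m+ε_i)) for integers k, ℓ, m, where ε_j = e^{2πij/p}. Then Γ(k,k,0) = p²(p²+2)/48 if k ≡ 0 (mod p), and Γ(k,k,0) = (p²/2) · 1/(ε_k·|1-ε_k|²) if k ≢ 0 (mod p). -/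
open scoped BigOperators

noncomputable section

/-- `Γ(k,ℓ,m) = ∑_{i=0}^{p-1} ε_i² / ((1+ε_i)(ε_k+ε_i)(ε_ℓ+ε_i)(ε_m+ε_i))`. -/
def Gamma (p : ℕ) (k l m : ℤ) : ℂ :=
  ∑ i ∈ Finset.range p,
    (eps p i) ^ 2 /
      ((1 + eps p i) * (eps p k + eps p i) * (eps p l + eps p i) * (eps p m + eps p i))


/-! Let `ζ` be a primitive `n`-th root of unity, `n` odd, and `yᵢ = (x + ζ^i)⁻¹`. Substituting
`X + x` into `∏ᵢ (X + ζ^i) = X^n + 1` gives `∏ᵢ (1 + yᵢ X) = ((X + x)^n + 1) / (x^n + 1)`, so the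
elementary symmetric functions of the `yᵢ` are `eₘ = C(n,m) x^(n-m) / (x^n + 1)`, and Newton's
identities turn these into the power sums `∑ᵢ yᵢ^m`. By partial fractions, `Γ(k,k,0)` is a
combination of such power sums: for `x = 1` up to `m = 4` when `ε_k = 1`, and for `x = 1` and
`x = ε_k` up to `m = 2` otherwise. -/

open Finset Polynomial

theorem Finset.coeff_prod_one_add_C_mul_X {ι R : Type*} [CommRing R] (s : Finset ι) (f : ι → R)
    (m : ℕ) : (∏ i ∈ s, (1 + C (f i) * X)).coeff m = ∑ t ∈ s.powersetCard m, ∏ i ∈ t, f i := by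
  simp_rw [prod_one_add, mul_comm (C _), prod_mul_distrib, prod_const, ← map_prod, finsetSum_coeff,
    coeff_X_pow_mul', coeff_C, powersetCard_eq_filter, sum_filter]
  refine sum_congr rfl fun t _ => ?_
  split_ifs <;> first | rfl | omega

namespace MvPolynomial

variable (σ : Type*) [Fintype σ] (R : Type*) [CommRing R]

theorem psum_two_eq_esymm : psum σ R 2 = esymm σ R 1 ^ 2 - 2 * esymm σ R 2 := by
  rw [psum_eq_mul_esymm_sub_sum σ R 2 two_pos]
  simp [sum_filter, Nat.antidiagonal_succ]
  ring

theorem psum_three_eq_esymm :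
    psum σ R 3 = esymm σ R 1 ^ 3 - 3 * esymm σ R 1 * esymm σ R 2 + 3 * esymm σ R 3 := by
  rw [psum_eq_mul_esymm_sub_sum σ R 3 three_pos]
  simp [sum_filter, Nat.antidiagonal_succ, psum_two_eq_esymm]
  ring

theorem psum_four_eq_esymm :
    psum σ R 4 = esymm σ R 1 ^ 4 - 4 * esymm σ R 1 ^ 2 * esymm σ R 2 + 2 * esymm σ R 2 ^ 2
      + 4 * esymm σ R 1 * esymm σ R 3 - 4 * esymm σ R 4 := by
  rw [psum_eq_mul_esymm_sub_sum σ R 4 four_pos]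
  simp [sum_filter, Nat.antidiagonal_succ, psum_two_eq_esymm, psum_three_eq_esymm]
  ring

variable {σ R}

theorem aeval_esymm_eq_coeff_prod (f : σ → R) (m : ℕ) :
    aeval f (esymm σ R m) = (∏ i, (1 + Polynomial.C (f i) * Polynomial.X)).coeff m := by
  simp only [esymm, map_sum, map_prod, aeval_X, coeff_prod_one_add_C_mul_X]

theorem aeval_psum_fin_eq_sum_range (f : ℕ → R) (n k : ℕ) :
    aeval (fun i : Fin n => f i) (psum (Fin n) R k) = ∑ i ∈ range n, f i ^ k := by
  simp only [psum, map_sum, map_pow, aeval_X, Fin.sum_univ_eq_sum_range (fun i => f i ^ k)]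

end MvPolynomial

theorem sq_div_one_add_pow_four {K : Type*} [Field K] {w : K} (hw : 1 + w ≠ 0) :
    w ^ 2 / (1 + w) ^ 4 = (1 + w)⁻¹ ^ 2 - 2 * (1 + w)⁻¹ ^ 3 + (1 + w)⁻¹ ^ 4 := by
  field_simp
  ring

theorem sq_div_one_add_sq_mul_add_sq {K : Type*} [Field K] {w a : K} (hw : 1 + w ≠ 0)
    (hwa : a + w ≠ 0) (ha : a ≠ 1) :
    w ^ 2 / ((1 + w) ^ 2 * (a + w) ^ 2)
      = -2 * a / (a - 1) ^ 3 * (1 + w)⁻¹ + 1 / (a - 1) ^ 2 * (1 + w)⁻¹ ^ 2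
        + 2 * a / (a - 1) ^ 3 * (a + w)⁻¹ + a ^ 2 / (a - 1) ^ 2 * (a + w)⁻¹ ^ 2 := by
  have : a - 1 ≠ 0 := sub_ne_zero.mpr ha
  field_simp
  ring

theorem Nat.cast_choose_three (K : Type*) [Field K] [CharZero K] (n : ℕ) :
    (n.choose 3 : K) = n * (n - 1) * (n - 2) / 6 := by
  rw [Nat.cast_choose_eq_descPochhammer_div]
  simp [descPochhammer_succ_right, Nat.factorial]

theorem Nat.cast_choose_four (K : Type*) [Field K] [CharZero K] (n : ℕ) :
    (n.choose 4 : K) = n * (n - 1) * (n - 2) * (n - 3) / 24 := by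
  rw [Nat.cast_choose_eq_descPochhammer_div]
  simp [descPochhammer_succ_right, Nat.factorial]

namespace IsPrimitiveRoot

section Domain

variable {R : Type*} [CommRing R] [IsDomain R] {n : ℕ} {ζ : R}

theorem prod_X_add_C_pow (hζ : IsPrimitiveRoot ζ n) (hn : Odd n) :
    ∏ i : Fin n, (X + C (ζ ^ (i : ℕ))) = X ^ n + 1 := by
  have h := X_pow_sub_C_eq_prod hζ hn.pos (α := -1) (a := -1) hn.neg_one_pow
  rw [Fin.prod_univ_eq_prod_range (fun i => X + C (ζ ^ i))]
  simpa [sub_eq_add_neg] using h.symm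

theorem prod_add_pow (hζ : IsPrimitiveRoot ζ n) (hn : Odd n) (x : R) :
    ∏ i : Fin n, (x + ζ ^ (i : ℕ)) = x ^ n + 1 := by
  simpa [eval_prod] using congrArg (eval x) (hζ.prod_X_add_C_pow hn)

theorem add_pow_ne_zero (hζ : IsPrimitiveRoot ζ n) (hn : Odd n) {x : R} (hx : x ^ n + 1 ≠ 0)
    (i : ℕ) : x + ζ ^ i ≠ 0 := by
  intro h
  have hi : x + ζ ^ (i % n) = 0 := by rwa [← pow_mod_orderOf, ← hζ.eq_orderOf] at h
  exact hx <| hζ.prod_add_pow hn x ▸ prod_eq_zero (mem_univ ⟨i % n, Nat.mod_lt i hn.pos⟩) hi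

end Domain

variable {K : Type*} [Field K] {n : ℕ} {ζ : K}

theorem prod_one_add_inv_add_pow_mul_X (hζ : IsPrimitiveRoot ζ n) (hn : Odd n) {x : K}
    (hx : x ^ n + 1 ≠ 0) :
    ∏ i : Fin n, (1 + C (x + ζ ^ (i : ℕ))⁻¹ * X) = C (x ^ n + 1)⁻¹ * ((X + C x) ^ n + 1) := by
  have hfactor (i : ℕ) :
      1 + C (x + ζ ^ i)⁻¹ * X = C (x + ζ ^ i)⁻¹ * ((X + C x) + C (ζ ^ i)) := by
    rw [add_assoc, ← map_add, mul_add, ← map_mul, inv_mul_cancel₀ (hζ.add_pow_ne_zero hn hx i),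
      map_one, add_comm, mul_comm]
  have hshift := congrArg (·.comp (X + C x)) (hζ.prod_X_add_C_pow hn)
  rw [Polynomial.prod_comp] at hshift
  simp only [add_comp, X_comp, C_comp, pow_comp, one_comp] at hshift
  rw [prod_congr rfl fun (i : Fin n) _ => hfactor i, prod_mul_distrib, ← map_prod, prod_inv_distrib,
    hζ.prod_add_pow hn, hshift]

theorem aeval_esymm_inv_add_pow (hζ : IsPrimitiveRoot ζ n) (hn : Odd n) {x : K}
    (hx : x ^ n + 1 ≠ 0) {m : ℕ} (hm : m ≠ 0) :
    MvPolynomial.aeval (fun i : Fin n => (x + ζ ^ (i : ℕ))⁻¹) (MvPolynomial.esymm (Fin n) K m)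
      = n.choose m * x ^ (n - m) / (x ^ n + 1) := by
  rw [MvPolynomial.aeval_esymm_eq_coeff_prod, hζ.prod_one_add_inv_add_pow_mul_X hn hx, coeff_C_mul,
    coeff_add, coeff_X_add_C_pow, coeff_one, if_neg hm, add_zero, inv_mul_eq_div, mul_comm]

theorem sum_inv_add_pow (hζ : IsPrimitiveRoot ζ n) (hn : Odd n) {x : K} (hx : x ^ n + 1 ≠ 0) :
    ∑ i ∈ range n, (x + ζ ^ i)⁻¹ = n * x ^ (n - 1) / (x ^ n + 1) := by
  simpa [MvPolynomial.psum_one, ← MvPolynomial.esymm_one, hζ.aeval_esymm_inv_add_pow hn hx]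
    using (MvPolynomial.aeval_psum_fin_eq_sum_range (fun i => (x + ζ ^ i)⁻¹) n 1).symm

theorem sum_inv_add_pow_sq (hζ : IsPrimitiveRoot ζ n) (hn : Odd n) {x : K} (hx : x ^ n + 1 ≠ 0) :
    ∑ i ∈ range n, (x + ζ ^ i)⁻¹ ^ 2
      = (n * x ^ (n - 1) / (x ^ n + 1)) ^ 2 - 2 * (n.choose 2 * x ^ (n - 2) / (x ^ n + 1)) := by
  rw [← MvPolynomial.aeval_psum_fin_eq_sum_range, MvPolynomial.psum_two_eq_esymm, map_sub,
    map_pow, map_mul, map_ofNat, hζ.aeval_esymm_inv_add_pow hn hx one_ne_zero,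
    hζ.aeval_esymm_inv_add_pow hn hx two_ne_zero, Nat.choose_one_right]

variable [CharZero K]

theorem sum_sq_div_one_add_pow_four (hζ : IsPrimitiveRoot ζ n) (hn : Odd n) :
    ∑ i ∈ range n, (ζ ^ i) ^ 2 / (1 + ζ ^ i) ^ 4 = (n : K) ^ 2 * (n ^ 2 + 2) / 48 := by
  have h2 : (1 : K) ^ n + 1 ≠ 0 := by norm_num
  have he (m : ℕ) (hm : m ≠ 0) := hζ.aeval_esymm_inv_add_pow hn h2 hm
  rw [sum_congr rfl fun i _ => sq_div_one_add_pow_four (hζ.add_pow_ne_zero hn h2 i),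
    sum_add_distrib, sum_sub_distrib, ← mul_sum]
  simp only [← MvPolynomial.aeval_psum_fin_eq_sum_range (fun i => (1 + ζ ^ i)⁻¹),
    MvPolynomial.psum_two_eq_esymm, MvPolynomial.psum_three_eq_esymm,
    MvPolynomial.psum_four_eq_esymm, map_add, map_sub, map_mul, map_pow, map_ofNat,
    he 1 one_ne_zero, he 2 two_ne_zero, he 3 three_ne_zero, he 4 four_ne_zero,
    Nat.choose_one_right, Nat.cast_choose_two, Nat.cast_choose_three, Nat.cast_choose_four, one_pow]
  ring

theorem sum_sq_div_one_add_sq_mul_add_sq (hζ : IsPrimitiveRoot ζ n) (hn : Odd n) {η : K}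
    (hη : η ^ n = 1) (hη1 : η ≠ 1) :
    ∑ i ∈ range n, (ζ ^ i) ^ 2 / ((1 + ζ ^ i) ^ 2 * (η + ζ ^ i) ^ 2)
      = -((n : K) ^ 2 / 2) / (η - 1) ^ 2 := by
  have h2 : (1 : K) ^ n + 1 ≠ 0 := by norm_num
  have hη2 : η ^ n + 1 ≠ 0 := by rw [hη]; norm_num
  have hη0 : η ≠ 0 := by rintro rfl; simp [zero_pow hn.pos.ne'] at hη
  have hn2 : 2 ≤ n := by
    have : n ≠ 1 := by rintro rfl; exact hη1 (by simpa using hη)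
    have := hn.pos
    omega
  have hpow1 : η ^ (n - 1) = η⁻¹ := by rw [pow_sub₀ _ hη0 (by omega), hη, pow_one, one_mul]
  have hpow2 : η ^ (n - 2) = η⁻¹ ^ 2 := by rw [pow_sub₀ _ hη0 hn2, hη, one_mul, inv_pow]
  rw [sum_congr rfl fun i _ => sq_div_one_add_sq_mul_add_sq (hζ.add_pow_ne_zero hn h2 i)
      (hζ.add_pow_ne_zero hn hη2 i) hη1]
  simp only [sum_add_distrib, ← mul_sum, hζ.sum_inv_add_pow hn h2, hζ.sum_inv_add_pow hn hη2,
    hζ.sum_inv_add_pow_sq hn h2, hζ.sum_inv_add_pow_sq hn hη2, hη, hpow1, hpow2, one_pow,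
    Nat.cast_choose_two]
  have : η - 1 ≠ 0 := sub_ne_zero.mpr hη1
  field_simp
  ring

end IsPrimitiveRoot

theorem Complex.mul_norm_one_sub_sq {η : ℂ} (hη : ‖η‖ = 1) :
    η * ((‖1 - η‖ : ℝ) : ℂ) ^ 2 = -(η - 1) ^ 2 := by
  have hη0 : η ≠ 0 := norm_ne_zero_iff.mp (by rw [hη]; exact one_ne_zero)
  rw [← Complex.mul_conj', map_sub, map_one, ← Complex.inv_eq_conj hη]
  field_simp
  ring

open Complex in
theorem eps_eq_zpow (p : ℕ) (j : ℤ) : eps p j = exp (2 * Real.pi * I / p) ^ j := by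
  rw [eps, ← exp_int_mul]
  ring_nf

theorem Gamma_self_zero (p : ℕ) (k : ℤ) :
    Gamma p k k 0
      = ∑ i ∈ range p, eps p i ^ 2 / ((1 + eps p i) ^ 2 * (eps p k + eps p i) ^ 2) := by
  have h0 : eps p 0 = 1 := by simp [eps]
  simp only [Gamma, h0]
  exact sum_congr rfl fun i _ => by ring

theorem stmt13_general (p : ℕ) (hodd : Odd p) (k : ℤ) :
    (k % (p : ℤ) = 0 →
      Gamma p k k 0 = (p : ℂ) ^ 2 * ((p : ℂ) ^ 2 + 2) / 48) ∧
    (k % (p : ℤ) ≠ 0 →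
      Gamma p k k 0
        = (p : ℂ) ^ 2 / 2 *
            (1 / (eps p k * ((‖1 - eps p k‖ : ℝ) : ℂ) ^ 2))) := by
  set ζ := Complex.exp (2 * Real.pi * Complex.I / p)
  have hζ : IsPrimitiveRoot ζ p := Complex.isPrimitiveRoot_exp p hodd.pos.ne'
  have hΓ : Gamma p k k 0
      = ∑ i ∈ range p, (ζ ^ i) ^ 2 / ((1 + ζ ^ i) ^ 2 * (eps p k + ζ ^ i) ^ 2) := by
    have heps (i : ℕ) : eps p i = ζ ^ i := by rw [eps_eq_zpow, zpow_natCast]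
    simp only [Gamma_self_zero, heps]
  have heps_eq_one : eps p k = 1 ↔ k % p = 0 := by
    rw [eps_eq_zpow, hζ.zpow_eq_one_iff_dvd, Int.dvd_iff_emod_eq_zero]
  refine ⟨fun hk => ?_, fun hk => ?_⟩
  · rw [hΓ, heps_eq_one.mpr hk, ← hζ.sum_sq_div_one_add_pow_four hodd]
    exact sum_congr rfl fun i _ => by ring
  · have hη : eps p k ^ p = 1 := by
      rw [eps_eq_zpow, ← zpow_natCast, ← zpow_mul, mul_comm k, zpow_mul, zpow_natCast,
        hζ.pow_eq_one, one_zpow]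
    rw [hΓ, hζ.sum_sq_div_one_add_sq_mul_add_sq hodd hη (mt heps_eq_one.mp hk),
      Complex.mul_norm_one_sub_sq (Complex.norm_eq_one_of_pow_eq_one hη hodd.pos.ne'), div_neg]
    ring

/-- Evaluation of `Γ(k,k,0)`: it equals `p²(p²+2)/48` when `k ≡ 0 (mod p)` and
`(p²/2)·1/(ε_k |1-ε_k|²)` otherwise. -/
theorem stmt13 (p : ℕ) (hp : p.Prime) (hodd : Odd p) (k : ℤ) :
    (k % (p : ℤ) = 0 →
      Gamma p k k 0 = (p : ℂ) ^ 2 * ((p : ℂ) ^ 2 + 2) / 48) ∧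
    (k % (p : ℤ) ≠ 0 →
      Gamma p k k 0
        = (p : ℂ) ^ 2 / 2 *
            (1 / (eps p k * ((‖1 - eps p k‖ : ℝ) : ℂ) ^ 2))) :=
  stmt13_general p hodd k
end
end

section
/- Let p be an odd prime and define Γ(k,ℓ,m) = ∑_{i=0}^{p-1} ε_i² / ((1+ε_i)(ε_k+ε_i)(ε_ℓ+ε_i)(ε_m+ε_i)) for integers k, ℓ, m, where ε_j = e^{2πij/p}. Then ∑_{0≤k,ℓ,m<p} |Γ(k,ℓ,m)| ≤ (p log p)⁴. -/
open scoped BigOperators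

noncomputable section

open Finset Real

/-!
Put `f j = |1 + ε_j|⁻¹`. Factoring `ε_k + ε_i = ε_i (1 + ε_{k-i})`, the triangle inequality gives
`|Γ(k,ℓ,m)| ≤ ∑_i f(i) f(k-i) f(ℓ-i) f(m-i)`, and since `f` is `p`-periodic, summing over `k, ℓ, m`
yields exactly `S⁴` with `S = ∑_j f j`.

For `p = 2q+1` one has `f j = 1 / (2 |sin (π (p - 2j) / 2p)|)`, and `|p - 2j|` runs over the odd
numbers up to `p` (each below `p` twice). With `1 / sin x ≤ 1 / x + 3/5` on `(0, π/2]` and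
`∑_{k<n} 1/(2k+1) ≤ 1 + (log n)/2` this gives `S ≤ (p/π)(2 - log 2 + log p) + 3p/10 ≤ p log p`.
-/

theorem norm_eps (p : ℕ) (j : ℤ) : ‖eps p j‖ = 1 := by
  simp [eps, Complex.norm_exp]

theorem eps_add (p : ℕ) (a b : ℤ) : eps p (a + b) = eps p a * eps p b := by
  unfold eps; rw [← Complex.exp_add]; push_cast; ring_nf

theorem eps_periodic (p : ℕ) : Function.Periodic (eps p) p := by
  intro j
  rcases eq_or_ne p 0 with rfl | hp
  · simp
  · have hpp : eps p p = 1 := by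
      rw [eps, Int.cast_natCast, mul_div_cancel_right₀ _ (Nat.cast_ne_zero.2 hp),
        Complex.exp_two_pi_mul_I]
    rw [eps_add, hpp, mul_one]

theorem norm_eps_add_eps (p : ℕ) (a b : ℤ) : ‖eps p a + eps p b‖ = ‖1 + eps p (a - b)‖ := by
  rw [← one_mul ‖1 + _‖, ← norm_eps p b, ← norm_mul, mul_add, mul_one, ← eps_add, add_sub_cancel,
    add_comm]

theorem norm_one_add_eps (p : ℕ) (j : ℤ) : ‖1 + eps p j‖ = 2 * |cos (π * j / p)| := by
  set θ : ℝ := π * j / p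
  have h : 1 + eps p j = Complex.exp (θ * Complex.I) * (2 * Complex.cos θ) := by
    rw [Complex.two_cos, mul_add, ← Complex.exp_add, ← Complex.exp_add, eps, neg_mul,
      add_neg_cancel, Complex.exp_zero, add_comm]
    push_cast [θ]
    ring_nf
  rw [h, norm_mul, Complex.norm_exp_ofReal_mul_I, one_mul, norm_mul, Complex.norm_two,
    ← Complex.ofReal_cos, Complex.norm_real, Real.norm_eq_abs]

theorem Function.Periodic.sum_range_add_right {M : Type*} [AddCommGroup M] {g : ℤ → M} {p : ℕ}
    (hg : Function.Periodic g p) (a : ℤ) :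
    ∑ k ∈ range p, g (k + a) = ∑ k ∈ range p, g k := by
  have step : ∀ a : ℤ, ∑ k ∈ range p, g (k + (a + 1)) = ∑ k ∈ range p, g (k + a) := by
    intro a
    have h := (sum_range_succ (fun k : ℕ => g (k + a)) p).symm.trans
      (sum_range_succ' (fun k : ℕ => g (k + a)) p)
    simp only [Nat.cast_succ, Nat.cast_zero, zero_add, add_comm (p : ℤ) a, hg a,
      add_assoc, add_comm (1 : ℤ) a] at h
    exact add_right_cancel h.symm
  induction a using Int.induction_on with
  | zero => simp
  | succ i ih => rw [step, ih]
  | pred i ih => rw [← ih, ← step, sub_add_cancel]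

theorem Function.Periodic.sum_range_sum_range_mul_sub {R : Type*} [CommRing R] {f : ℤ → R} {p : ℕ}
    (hf : Function.Periodic f p) (g : ℕ → R) :
    ∑ m ∈ range p, ∑ i ∈ range p, g i * f (m - i) = (∑ i ∈ range p, g i) * ∑ j ∈ range p, f j := by
  rw [sum_comm, sum_mul]
  refine sum_congr rfl fun i _ => ?_
  simp only [← mul_sum, sub_eq_add_neg, hf.sum_range_add_right]

theorem sum_range_mul_shifts_eq_pow_four {R : Type*} [CommRing R] {f : ℤ → R} {p : ℕ}
    (hf : Function.Periodic f p) :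
    ∑ k ∈ range p, ∑ l ∈ range p, ∑ m ∈ range p, ∑ i ∈ range p,
      f i * f (k - i) * f (l - i) * f (m - i) = (∑ j ∈ range p, f j) ^ 4 := by
  simp only [hf.sum_range_sum_range_mul_sub, ← sum_mul]
  ring

theorem norm_Gamma_le (p : ℕ) (k l m : ℤ) :
    ‖Gamma p k l m‖ ≤ ∑ i ∈ range p, ‖1 + eps p i‖⁻¹ * ‖1 + eps p (k - i)‖⁻¹ *
      ‖1 + eps p (l - i)‖⁻¹ * ‖1 + eps p (m - i)‖⁻¹ := by
  refine (norm_sum_le _ _).trans_eq (sum_congr rfl fun i _ => ?_)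
  simp only [norm_div, norm_pow, norm_eps, one_pow, norm_mul, norm_eps_add_eps, one_div, mul_inv]

theorem inv_sin_le_inv_add {x : ℝ} (hx0 : 0 < x) (hx : x ≤ π / 2) : (sin x)⁻¹ ≤ x⁻¹ + 3 / 5 := by
  have hx2 : x < 8 / 5 := by linarith [pi_lt_d2]
  have hpos : 0 < x - x ^ 3 / 6 := by
    have := mul_pos hx0 (show 0 < 6 - x ^ 2 by nlinarith)
    linarith
  calc (sin x)⁻¹ ≤ (x - x ^ 3 / 6)⁻¹ := inv_anti₀ hpos (sin_gt_sub_cube hx0).le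
    _ ≤ x⁻¹ + 3 / 5 := by
      rw [inv_le_iff_one_le_mul₀' hpos, sub_mul, mul_add, mul_inv_cancel₀ hx0.ne']
      have : x ^ 3 / 6 * x⁻¹ = x ^ 2 / 6 := by field_simp
      nlinarith

theorem sum_range_odd_sub_two_mul {M : Type*} [AddCommMonoid M] (g : ℤ → M) (q : ℕ) :
    ∑ j ∈ range (2 * q + 1), g (2 * q + 1 - 2 * j) =
      ∑ k ∈ range (q + 1), g (2 * k + 1) + ∑ k ∈ range q, g (-(2 * k + 1)) := by
  rw [show 2 * q + 1 = (q + 1) + q by ring, sum_range_add, ← sum_range_reflect]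
  congr 1 <;> refine sum_congr rfl fun k hk => congrArg g ?_
  · rw [Nat.cast_sub (by simpa [Nat.lt_succ_iff] using hk)]
    push_cast; ring
  · push_cast; ring

theorem two_div_two_mul_add_one_le_log_one_add_inv {a : ℝ} (ha : 0 < a) :
    2 / (2 * a + 1) ≤ log (1 + a⁻¹) := by
  have h := le_hasSum (hasSum_log_one_add_inv ha) 0 fun k _ => by positivity
  simpa [div_eq_mul_inv] using h

theorem sum_range_inv_two_mul_add_one_le (n : ℕ) :
    ∑ k ∈ range n, (2 * k + 1 : ℝ)⁻¹ ≤ 1 + log n / 2 := by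
  induction n with
  | zero => simp
  | succ n ih =>
    rcases Nat.eq_zero_or_pos n with rfl | hn
    · simp
    · have hn' : (0 : ℝ) < n := Nat.cast_pos.2 hn
      have hlog := two_div_two_mul_add_one_le_log_one_add_inv hn'
      rw [show 1 + (n : ℝ)⁻¹ = (n + 1) / n by field_simp, log_div (by positivity) hn'.ne'] at hlog
      rw [sum_range_succ]
      push_cast
      have : (2 * n + 1 : ℝ)⁻¹ = 2 / (2 * n + 1) / 2 := by ring
      linarith

theorem inv_two_mul_abs_sin_le {a P : ℝ} (ha : 0 < a) (haP : a ≤ P) :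
    (2 * |sin (π * a / (2 * P))|)⁻¹ ≤ P / π * a⁻¹ + 3 / 10 := by
  have hP : 0 < P := ha.trans_le haP
  have hx0 : 0 < π * a / (2 * P) := by positivity
  have hx : π * a / (2 * P) ≤ π / 2 := by
    rw [div_le_div_iff₀ (by positivity) two_pos]; nlinarith [pi_pos]
  have hsin := (sin_pos_of_pos_of_lt_pi hx0 (hx.trans_lt (half_lt_self pi_pos))).le
  rw [abs_of_nonneg hsin, mul_inv]
  calc 2⁻¹ * (sin (π * a / (2 * P)))⁻¹ ≤ 2⁻¹ * ((π * a / (2 * P))⁻¹ + 3 / 5) := by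
        gcongr; exact inv_sin_le_inv_add hx0 hx
    _ = P / π * a⁻¹ + 3 / 10 := by field_simp; ring

theorem sum_range_inv_norm_one_add_eps_le_odd_harmonic (q : ℕ) :
    ∑ j ∈ range (2 * q + 1), ‖1 + eps (2 * q + 1) j‖⁻¹ ≤
      (2 * q + 1 : ℝ) / π * (∑ k ∈ range (q + 1), (2 * k + 1 : ℝ)⁻¹ +
        ∑ k ∈ range q, (2 * k + 1 : ℝ)⁻¹) + 3 / 10 * (2 * q + 1) := by
  set P : ℝ := 2 * q + 1
  set g : ℤ → ℝ := fun a => (2 * |sin (π * a / (2 * P))|)⁻¹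
  have hP : 0 < P := by positivity
  have hnorm (j : ℕ) : ‖1 + eps (2 * q + 1) j‖⁻¹ = g (2 * q + 1 - 2 * j) := by
    rw [norm_one_add_eps, ← sin_pi_div_two_sub]
    simp only [g, P]
    push_cast
    congr 4
    field_simp
  have hg_neg (a : ℤ) : g (-a) = g a := by
    simp only [g, Int.cast_neg, mul_neg, neg_div, sin_neg, abs_neg]
  have hg_le (k : ℕ) (hk : k < q + 1) : g (2 * k + 1) ≤ P / π * (2 * k + 1 : ℝ)⁻¹ + 3 / 10 := by
    have hk' : (k : ℝ) + 1 ≤ q + 1 := by exact_mod_cast hk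
    simpa only [g, Int.cast_add, Int.cast_mul, Int.cast_ofNat, Int.cast_natCast, Int.cast_one]
      using inv_two_mul_abs_sin_le (a := 2 * k + 1) (P := P) (by positivity) (by linarith)
  calc ∑ j ∈ range (2 * q + 1), ‖1 + eps (2 * q + 1) j‖⁻¹
      = ∑ k ∈ range (q + 1), g (2 * k + 1) + ∑ k ∈ range q, g (2 * k + 1) := by
        simp only [hnorm, sum_range_odd_sub_two_mul, hg_neg]
    _ ≤ ∑ k ∈ range (q + 1), (P / π * (2 * k + 1 : ℝ)⁻¹ + 3 / 10) +
        ∑ k ∈ range q, (P / π * (2 * k + 1 : ℝ)⁻¹ + 3 / 10) := by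
        gcongr with k hk k hk
        · exact hg_le k (mem_range.1 hk)
        · exact hg_le k (by simp at hk; omega)
    _ = _ := by
        simp only [sum_add_distrib, ← mul_sum, sum_const, card_range, nsmul_eq_mul, P]
        push_cast
        ring

theorem div_pi_mul_add_le_mul_log (q : ℕ) (hq : 1 ≤ q) :
    (2 * q + 1 : ℝ) / π * ((1 + log (q + 1 : ℕ) / 2) + (1 + log q / 2)) + 3 / 10 * (2 * q + 1) ≤
      (2 * q + 1) * log (2 * q + 1) := by
  set P : ℝ := 2 * q + 1
  set L := log P
  have hq' : (1 : ℝ) ≤ q := by exact_mod_cast hq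
  have hP : 0 < P := by positivity
  have hlog : log q + log (q + 1 : ℕ) + 2 * log 2 ≤ 2 * L := by
    have h := log_le_log (by positivity) (show (q : ℝ) * (q + 1) * 2 ^ 2 ≤ P ^ 2 by nlinarith)
    rwa [log_mul (by positivity) (by positivity), log_mul (by positivity) (by positivity),
      log_pow, log_pow, ← Nat.cast_succ] at h
  have hL : log 3 ≤ L := log_le_log (by norm_num) (by simp only [P]; linarith)
  have key : 2 - log 2 + L + 3 / 10 * π ≤ π * L := by
    nlinarith [log_two_gt_d9, log_three_gt_d9, pi_gt_d2, pi_lt_d2,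
      mul_le_mul_of_nonneg_left hL (show 0 ≤ π - 1 by linarith [pi_gt_three])]
  have hsum : (1 + log (q + 1 : ℕ) / 2) + (1 + log q / 2) ≤ 2 - log 2 + L := by linarith
  calc _ ≤ P / π * (2 - log 2 + L) + 3 / 10 * P := by gcongr
    _ = P / π * (2 - log 2 + L + 3 / 10 * π) := by field_simp
    _ ≤ P / π * (π * L) := by gcongr
    _ = P * L := by field_simp

theorem sum_range_inv_norm_one_add_eps_le_mul_log (q : ℕ) (hq : 1 ≤ q) :
    ∑ j ∈ range (2 * q + 1), ‖1 + eps (2 * q + 1) j‖⁻¹ ≤ (2 * q + 1) * log (2 * q + 1) := by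
  refine (sum_range_inv_norm_one_add_eps_le_odd_harmonic q).trans
    (le_trans ?_ (div_pi_mul_add_le_mul_log q hq))
  gcongr
  · exact sum_range_inv_two_mul_add_one_le (q + 1)
  · exact sum_range_inv_two_mul_add_one_le q

/-- `∑_{0 ≤ k,ℓ,m < p} |Γ(k,ℓ,m)| ≤ (p log p)⁴`. -/
theorem stmt14 (p : ℕ) (hp : p.Prime) (hodd : Odd p) :
    ∑ k ∈ Finset.range p, ∑ l ∈ Finset.range p, ∑ m ∈ Finset.range p,
      ‖Gamma p k l m‖ ≤ ((p : ℝ) * Real.log p) ^ 4 := by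
  obtain ⟨q, rfl⟩ := hodd
  have hq : 1 ≤ q := by have := hp.two_le; omega
  set f : ℤ → ℝ := fun j => ‖1 + eps (2 * q + 1) j‖⁻¹
  calc _ ≤ ∑ k ∈ range (2 * q + 1), ∑ l ∈ range (2 * q + 1), ∑ m ∈ range (2 * q + 1),
        ∑ i ∈ range (2 * q + 1), f i * f (k - i) * f (l - i) * f (m - i) := by
        gcongr with k _ l _ m _
        exact norm_Gamma_le _ _ _ _
    _ = (∑ j ∈ range (2 * q + 1), f j) ^ 4 :=
        sum_range_mul_shifts_eq_pow_four ((eps_periodic (2 * q + 1)).comp fun z => ‖1 + z‖⁻¹)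
    _ ≤ _ := by
        refine pow_le_pow_left₀ (sum_nonneg fun _ _ => by positivity) ?_ 4
        push_cast
        exact sum_range_inv_norm_one_add_eps_le_mul_log q hq
end
end

section
/- Let p be an odd prime, let Z be a ternary quadratic-residue array of size p×p, and let s, t be real numbers with -1/2 < s, t ≤ 1/2. Then ∑_{0≤i,j<p} |Z_{s,t}(ε_i, ε_j)|⁴ = p⁴(p² - 1), where Z_{s,t}(x,y) denotes the generating function of the rotated array Z_{s,t} and ε_j = e^{2πij/p}. -/
open scoped BigOperators

noncomputable section

/-!
Evaluating the generating function at the `p`-th roots of unity is a discrete Fourier transform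
over `GF(p)²`. Rotating the array multiplies each Fourier coefficient by a root of unity, and for
the quadratic-residue array the coefficient at `(a, b)` is the Gauss sum `G(χ, ψ_{a,b})` of the
quadratic character `χ` of `GF(p²)` against the additive character
`ψ_{a,b}(c α + d α') = ε^{ac + bd}`. For `(a, b) ≠ 0` we have `G² = χ(-1) p²`, so `|G|⁴ = p⁴`,
while `G(χ, 1) = ∑ χ = 0`; there are `p² - 1` nonzero pairs.
-/

open ZMod

section DFT

variable {n m : ℕ} [NeZero n] [NeZero m]

lemma eps_eq_stdAddChar (j : ℤ) : eps n j = stdAddChar (j : ZMod n) :=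
  (stdAddChar_coe j).symm

lemma eps_pow (j : ℤ) (i : ℕ) : eps n j ^ i = stdAddChar ((j : ZMod n) * (i : ZMod n)) := by
  rw [eps_eq_stdAddChar, ← AddChar.map_nsmul_eq_pow, nsmul_eq_mul, mul_comm]

lemma norm_stdAddChar (x : ZMod n) : ‖stdAddChar x‖ = 1 :=
  Circle.norm_coe _

lemma sum_range_eq_sum_zmod {M : Type*} [AddCommMonoid M] (f : ℕ → M) :
    ∑ i ∈ Finset.range n, f i = ∑ c : ZMod n, f c.val :=
  Finset.sum_nbij' (fun i => (i : ZMod n)) ZMod.val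
    (fun _ _ => Finset.mem_univ _)
    (fun c _ => Finset.mem_range.mpr (ZMod.val_lt c))
    (fun _ hi => ZMod.val_natCast_of_lt (Finset.mem_range.mp hi))
    (fun c _ => ZMod.natCast_zmod_val c)
    (fun _ hi => by rw [ZMod.val_natCast_of_lt (Finset.mem_range.mp hi)])

lemma genFun_eps (A : ℤ × ℤ → ℝ) (a b : ℤ) :
    genFun n m A (eps n a) (eps m b) = ∑ c : ZMod n, ∑ d : ZMod m,
      (A (c.val, d.val) : ℂ) * stdAddChar ((a : ZMod n) * c) * stdAddChar ((b : ZMod m) * d) := by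
  simp only [genFun, sum_range_eq_sum_zmod, eps_pow, ZMod.natCast_zmod_val]

lemma val_add_intCast (c : ZMod n) (x : ℤ) :
    (((c + x).val : ℕ) : ℤ) = ((c.val : ℤ) + x) % n := by
  rw [← ZMod.val_intCast]
  push_cast [ZMod.natCast_zmod_val]
  rfl

lemma arrRotate_val (s t : ℝ) (A : ℤ × ℤ → ℝ) (c : ZMod n) (d : ZMod m) :
    arrRotate n m s t A (c.val, d.val)
      = A ((c + ⌊(n : ℝ) * s⌋).val, (d + ⌊(m : ℝ) * t⌋).val) := by
  have hc : (c.val : ℤ) < n := by exact_mod_cast ZMod.val_lt c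
  have hd : (d.val : ℤ) < m := by exact_mod_cast ZMod.val_lt d
  simp only [arrRotate, Int.cast_natCast, val_add_intCast]
  rw [if_pos ⟨by positivity, hc, by positivity, hd⟩]

lemma genFun_arrRotate_eps (s t : ℝ) (A : ℤ × ℤ → ℝ) (a b : ℤ) :
    genFun n m (arrRotate n m s t A) (eps n a) (eps m b)
      = stdAddChar (-((a : ZMod n) * (⌊(n : ℝ) * s⌋ : ZMod n)))
        * stdAddChar (-((b : ZMod m) * (⌊(m : ℝ) * t⌋ : ZMod m)))
        * genFun n m A (eps n a) (eps m b) := by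
  set σ : ZMod n := (⌊(n : ℝ) * s⌋ : ZMod n)
  set τ : ZMod m := (⌊(m : ℝ) * t⌋ : ZMod m)
  rw [genFun_eps, genFun_eps, Finset.mul_sum, ← (Equiv.subRight σ).sum_comp]
  refine Finset.sum_congr rfl fun c _ => ?_
  rw [Finset.mul_sum, ← (Equiv.subRight τ).sum_comp]
  refine Finset.sum_congr rfl fun d _ => ?_
  rw [Equiv.subRight_apply, Equiv.subRight_apply, arrRotate_val, sub_add_cancel, sub_add_cancel,
    mul_sub, mul_sub, sub_eq_neg_add, sub_eq_neg_add, AddChar.map_add_eq_mul,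
    AddChar.map_add_eq_mul]
  ring

lemma norm_genFun_arrRotate_eps (s t : ℝ) (A : ℤ × ℤ → ℝ) (a b : ℤ) :
    ‖genFun n m (arrRotate n m s t A) (eps n a) (eps m b)‖ = ‖genFun n m A (eps n a) (eps m b)‖ := by
  rw [genFun_arrRotate_eps, norm_mul, norm_mul, norm_stdAddChar, norm_stdAddChar, one_mul, one_mul]

end DFT

lemma norm_gaussSum_pow_four {F : Type*} [Field F] [Fintype F] {χ : MulChar F ℂ} (hχ : χ ≠ 1)
    (hχq : χ.IsQuadratic) {ψ : AddChar F ℂ} (hψ : ψ ≠ 1) :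
    ‖gaussSum χ ψ‖ ^ 4 = (Fintype.card F : ℝ) ^ 2 := by
  have hsq := gaussSum_sq hχ hχq (AddChar.IsPrimitive.of_ne_one hψ)
  have hχ_neg_one : ‖χ (-1)‖ = 1 :=
    Complex.norm_eq_one_of_pow_eq_one (by rw [← map_pow, neg_one_sq, map_one]) two_ne_zero
  calc ‖gaussSum χ ψ‖ ^ 4 = ‖gaussSum χ ψ ^ 2‖ ^ 2 := by rw [norm_pow]; ring
    _ = (Fintype.card F : ℝ) ^ 2 := by rw [hsq, norm_mul, hχ_neg_one, one_mul, Complex.norm_natCast]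

def complexQuadraticChar (F : Type*) [Field F] [Fintype F] [DecidableEq F] : MulChar F ℂ :=
  (quadraticChar F).ringHomComp (Int.castRingHom ℂ)

section QuadraticChar

variable {F : Type*} [Field F] [Fintype F] [DecidableEq F]

lemma complexQuadraticChar_ne_one (hF : ringChar F ≠ 2) : complexQuadraticChar F ≠ 1 :=
  (MulChar.ringHomComp_ne_one_iff Int.cast_injective).mpr (quadraticChar_ne_one hF)

lemma complexQuadraticChar_isQuadratic : (complexQuadraticChar F).IsQuadratic :=
  (quadraticChar_isQuadratic F).comp _

lemma complexQuadraticChar_sum_eq_zero (hF : ringChar F ≠ 2) :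
    ∑ x, complexQuadraticChar F x = 0 :=
  MulChar.sum_eq_zero_of_ne_one (complexQuadraticChar_ne_one hF)

end QuadraticChar

lemma quadChar_eq_complexQuadraticChar (p : ℕ) [Fact p.Prime] [Fintype (GaloisField p 2)]
    [DecidableEq (GaloisField p 2)] (x : GaloisField p 2) :
    (quadChar p x : ℂ) = complexQuadraticChar (GaloisField p 2) x := by
  simp only [complexQuadraticChar, MulChar.ringHomComp_apply, quadraticChar_apply,
    quadraticCharFun, quadChar]
  split_ifs <;> simp

section BasisAddChar

variable {N : ℕ} [NeZero N] {V : Type*} [AddCommGroup V] [Module (ZMod N) V]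
  (B : Module.Basis (Fin 2) (ZMod N) V)

def basisAddChar (a b : ZMod N) : AddChar V ℂ :=
  stdAddChar.compAddMonoidHom (a • B.coord 0 + b • B.coord 1).toAddMonoidHom

lemma basisAddChar_apply (a b c d : ZMod N) :
    basisAddChar B a b (c • B 0 + d • B 1) = stdAddChar (a * c) * stdAddChar (b * d) := by
  simp [basisAddChar, AddChar.map_add_eq_mul, mul_comm]

lemma basisAddChar_eq_one_iff (a b : ZMod N) : basisAddChar B a b = 1 ↔ a = 0 ∧ b = 0 := by
  refine ⟨fun h => ⟨?_, ?_⟩, ?_⟩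
  · apply injective_stdAddChar (N := N)
    simpa [h] using (basisAddChar_apply B a b 1 0).symm
  · apply injective_stdAddChar (N := N)
    simpa [h] using (basisAddChar_apply B a b 0 1).symm
  · rintro ⟨rfl, rfl⟩
    ext
    simp [basisAddChar]

end BasisAddChar

lemma qrArray_val (p : ℕ) [Fact p.Prime] (B : Module.Basis (Fin 2) (ZMod p) (GaloisField p 2))
    (c d : ZMod p) :
    qrArray p B (c.val, d.val) = quadChar p (c • B 0 + d • B 1) := by
  have hc : (c.val : ℤ) < p := by exact_mod_cast ZMod.val_lt c
  have hd : (d.val : ℤ) < p := by exact_mod_cast ZMod.val_lt d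
  rw [qrArray, if_pos ⟨by positivity, hc, by positivity, hd⟩]
  simp only [Int.cast_natCast, ZMod.natCast_zmod_val]

lemma genFun_qrArray_eps (p : ℕ) [Fact p.Prime] [Fintype (GaloisField p 2)]
    [DecidableEq (GaloisField p 2)] (B : Module.Basis (Fin 2) (ZMod p) (GaloisField p 2))
    (a b : ℤ) :
    genFun p p (qrArray p B) (eps p a) (eps p b)
      = gaussSum (complexQuadraticChar (GaloisField p 2)) (basisAddChar B a b) := by
  let e : ZMod p × ZMod p ≃ GaloisField p 2 :=
    (piFinTwoEquiv fun _ => ZMod p).symm.trans B.equivFun.symm.toEquiv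
  have he : ∀ c d, e (c, d) = c • B 0 + d • B 1 := fun c d => by
    simp [e, Module.Basis.equivFun_symm_apply, Fin.sum_univ_two]
  rw [genFun_eps, gaussSum, ← e.sum_comp, Fintype.sum_prod_type]
  simp only [he, qrArray_val, quadChar_eq_complexQuadraticChar, basisAddChar_apply, mul_assoc]

lemma ringChar_galoisField_ne_two {p : ℕ} [Fact p.Prime] (hodd : Odd p) (n : ℕ) :
    ringChar (GaloisField p n) ≠ 2 := by
  rw [ringChar.eq (GaloisField p n) p]
  rintro rfl
  exact Nat.not_odd_iff_even.mpr even_two hodd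

lemma norm_genFun_qrArray_eps_pow_four {p : ℕ} [Fact p.Prime] (hodd : Odd p)
    (B : Module.Basis (Fin 2) (ZMod p) (GaloisField p 2)) (a b : ℤ) :
    ‖genFun p p (qrArray p B) (eps p a) (eps p b)‖ ^ 4
      = if (a : ZMod p) = 0 ∧ (b : ZMod p) = 0 then 0 else (p : ℝ) ^ 4 := by
  classical
  let := Fintype.ofFinite (GaloisField p 2)
  have hF := ringChar_galoisField_ne_two hodd 2
  rw [genFun_qrArray_eps]
  split_ifs with hab
  · rw [(basisAddChar_eq_one_iff B _ _).mpr hab, gaussSum]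
    simp [complexQuadraticChar_sum_eq_zero hF]
  · rw [norm_gaussSum_pow_four (complexQuadraticChar_ne_one hF) complexQuadraticChar_isQuadratic
      ((basisAddChar_eq_one_iff B _ _).not.mpr hab), Fintype.card_eq_nat_card,
      GaloisField.card p 2 two_ne_zero]
    push_cast
    ring

theorem stmt15_general (p : ℕ) [Fact p.Prime] (hodd : Odd p)
    (B : Module.Basis (Fin 2) (ZMod p) (GaloisField p 2)) (s t : ℝ) :
    ∑ i ∈ Finset.range p, ∑ j ∈ Finset.range p,
      ‖genFun p p (arrRotate p p s t (qrArray p B)) (eps p i) (eps p j)‖ ^ 4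
      = (p : ℝ) ^ 4 * ((p : ℝ) ^ 2 - 1) := by
  simp only [norm_genFun_arrRotate_eps, norm_genFun_qrArray_eps_pow_four hodd,
    sum_range_eq_sum_zmod, Int.cast_natCast, ZMod.natCast_zmod_val]
  rw [← Fintype.sum_prod_type' (f := fun a b => if a = 0 ∧ b = 0 then (0 : ℝ) else (p : ℝ) ^ 4)]
  simp only [← Prod.mk_eq_zero, Finset.sum_ite, Finset.sum_const_zero, Finset.sum_const,
    Finset.filter_ne', Finset.card_erase_of_mem (Finset.mem_univ _), Finset.card_univ,
    Fintype.card_prod, ZMod.card, zero_add, nsmul_eq_mul]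
  have hp : 1 ≤ p * p := Nat.one_le_iff_ne_zero.mpr (NeZero.ne _)
  push_cast [hp]
  ring

/-- `∑_{0 ≤ i,j < p} |Z_{s,t}(ε_i, ε_j)|⁴ = p⁴(p² - 1)` for a rotated ternary
quadratic-residue array `Z` of size `p × p`. -/
theorem stmt15 (p : ℕ) [Fact p.Prime] (hodd : Odd p)
    (B : Module.Basis (Fin 2) (ZMod p) (GaloisField p 2)) (s t : ℝ)
    (hs1 : -(1/2) < s) (hs2 : s ≤ 1/2) (ht1 : -(1/2) < t) (ht2 : t ≤ 1/2) :
    ∑ i ∈ Finset.range p, ∑ j ∈ Finset.range p,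
      ‖genFun p p (arrRotate p p s t (qrArray p B)) (eps p i) (eps p j)‖ ^ 4
      = (p : ℝ) ^ 4 * ((p : ℝ) ^ 2 - 1) :=
  stmt15_general p hodd B s t
end
end
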